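/- arXiv:2504.03898 — 4 statements merged into one kernel-verified Lean document; each statement's English description precedes it below -/
import Mathlib

section
/- Fix an integer r ≥ 0. In the ring of formal power series in u with coefficients in the polynomial ring ℤ[s], let F_r(s,u) := Σ_{n≥1} (Σ_{k≥0} L'_{n,k+1}(r) s^k) uⁿ (the inner sum is finite since L'_{n,k+1}(r) = 0 whenever k+1 > 2n−1, for r ≥ 1, and whenever k ≥ 1, for r = 0). Then (1+s)·((1−u)^{r+1} − s(1−u)(1−s²u)^r)·F_r(s,u) = (1−s²u)^{r+1} − (1−u)^{r+1}. -/
open scoped Classical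

/-- A signed permutation of length `n`: a permutation `w` of `ℤ` with
`w(-i) = -w(i)` that fixes every integer of absolute value greater than `n`. -/
def IsSignedPerm (n : ℕ) (w : Equiv.Perm ℤ) : Prop :=
  (∀ i : ℤ, w (-i) = - w i) ∧ ∀ i : ℤ, (n : ℤ) < |i| → w i = i

/-- Membership in `X_n := {w ∈ 𝔅_n : w⁻¹(1) > 0}`. -/
def InXn (n : ℕ) (w : Equiv.Perm ℤ) : Prop :=
  IsSignedPerm n w ∧ 0 < w.symm 1

/-- The type B descent number `des_B(w) = #{i ∈ {0,…,n-1} : w_i > w_{i+1}}`,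
with the convention `w_0 = 0` (automatic, since a signed permutation fixes `0`). -/
noncomputable def desB (n : ℕ) (w : Equiv.Perm ℤ) : ℕ :=
  ((Finset.range n).filter fun i => w ((i : ℤ) + 1) < w (i : ℤ)).card

/-- The flag-excedance `fexc(w) = 2·#{i : w_i > i} + #{i : w_i < 0}`. -/
noncomputable def fexc (n : ℕ) (w : Equiv.Perm ℤ) : ℕ :=
  2 * ((Finset.Icc (1 : ℤ) (n : ℤ)).filter fun i => i < w i).card
    + ((Finset.Icc (1 : ℤ) (n : ℤ)).filter fun i => w i < 0).card

/-- The cyclic successor on `{-n,…,-1,1,…,n}` (with `(-1)⁺ = 1` and `n⁺ = -n`). -/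
def csucc (n : ℕ) (i : ℤ) : ℤ :=
  if i = -1 then 1 else if i = (n : ℤ) then -(n : ℤ) else i + 1

/-- The circular descent set `CDes(w) = {i ∈ {-n,…,-1,1,…,n} : w(i) > w(i⁺)}`. -/
noncomputable def cdesSet (n : ℕ) (w : Equiv.Perm ℤ) : Finset ℤ :=
  (Finset.Icc (-(n : ℤ)) (n : ℤ)).filter fun i => i ≠ 0 ∧ w (csucc n i) < w i

/-- The circular descent number `cdes(w) = |CDes(w)|`. -/
noncomputable def cdes (n : ℕ) (w : Equiv.Perm ℤ) : ℕ := (cdesSet n w).card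

/-- `a ≪ b`: there is a nonzero integer strictly between `a` and `b`. -/
def Lll (a b : ℤ) : Prop := ∃ c : ℤ, c ≠ 0 ∧ a < c ∧ c < b

/-- The big ascent number `basc(w) = |BAsc(w)|`, where `BAsc(w) ⊆ {-1,1,…,n}`:
`-1 ∈ BAsc(w)` iff `w_1 ≥ 2`; for `1 ≤ i ≤ n-1`, `i ∈ BAsc(w)` iff `w_i ≪ w_{i+1}`;
and `n ∈ BAsc(w)` iff `w_n ≤ -2`. -/
noncomputable def basc (n : ℕ) (w : Equiv.Perm ℤ) : ℕ :=
  ((insert (-1 : ℤ) (Finset.Icc (1 : ℤ) (n : ℤ))).filter fun i =>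
    if i = -1 then 2 ≤ w 1
    else if i = (n : ℤ) then w (n : ℤ) ≤ -2
    else Lll (w i) (w (i + 1))).card

/-- `L'_{n,k}(r)`: the number of half-integer points in the `r`-th dilate of the
half-open type C hypersimplex `Δ'_{C_n,k}`, in the `y`-coordinates. -/
noncomputable def Lp (n k r : ℕ) : ℕ :=
  if k = 1 then
    Set.ncard {y : Fin n → ℤ |
      (∀ j, 0 ≤ y j ∧ y j ≤ 2 * (r : ℤ)) ∧ (∀ j : Fin n, (j : ℕ) = 0 → y j ≤ (r : ℤ)) ∧
      0 ≤ ∑ j, y j ∧ ∑ j, y j ≤ (r : ℤ)}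
  else
    Set.ncard {y : Fin n → ℤ |
      (∀ j, 0 ≤ y j ∧ y j ≤ 2 * (r : ℤ)) ∧ (∀ j : Fin n, (j : ℕ) = 0 → y j ≤ (r : ℤ)) ∧
      ((k : ℤ) - 1) * r < ∑ j, y j ∧ ∑ j, y j ≤ (k : ℤ) * r}

/-- `L_{n,k}(r)`: the number of half-integer points in the `r`-th dilate of the
closed type C hypersimplex `Δ_{C_n,k}`, in the `y`-coordinates. -/
noncomputable def Lc (n k r : ℕ) : ℕ :=
  Set.ncard {y : Fin n → ℤ |
    (∀ j, 0 ≤ y j ∧ y j ≤ 2 * (r : ℤ)) ∧ (∀ j : Fin n, (j : ℕ) = 0 → y j ≤ (r : ℤ)) ∧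
    ((k : ℤ) - 1) * r ≤ ∑ j, y j ∧ ∑ j, y j ≤ (k : ℤ) * r}

/-- `ψ_{n,k} = #{w ∈ X_n : basc(w) = k}`. -/
noncomputable def psiN (n k : ℕ) : ℕ :=
  {w : Equiv.Perm ℤ | InXn n w ∧ basc n w = k}.ncard

/-- `ψ_{n,k}` with an integer index (`0` for negative `k`). -/
noncomputable def psiZ (n : ℕ) (k : ℤ) : ℕ :=
  {w : Equiv.Perm ℤ | InXn n w ∧ (basc n w : ℤ) = k}.ncard

/-- `Ψ_{C_n}(t) = Σ_k ψ_{n,k} t^k ∈ ℤ[t]`. -/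
noncomputable def PsiC (n : ℕ) : Polynomial ℤ :=
  ∑ᶠ k : ℕ, (psiN n k : Polynomial ℤ) * Polynomial.X ^ k

/-- `Ψ_{C_n}(t)` with rational coefficients. -/
noncomputable def PsiCQ (n : ℕ) : Polynomial ℚ :=
  ∑ᶠ k : ℕ, (psiN n k : Polynomial ℚ) * Polynomial.X ^ k

/-- The descent number of a permutation of `{1,…,m}`. -/
noncomputable def desA (m : ℕ) (σ : Equiv.Perm (Fin m)) : ℕ :=
  (Finset.univ.filter fun i : Fin m =>
    ∃ h : (i : ℕ) + 1 < m, σ ⟨(i : ℕ) + 1, h⟩ < σ i).card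

/-- The classical (type A) Eulerian polynomial `E_m^A(t) = Σ_{σ ∈ S_m} t^{des σ}`. -/
noncomputable def EulerianA (m : ℕ) : Polynomial ℚ :=
  ∑ σ : Equiv.Perm (Fin m), Polynomial.X ^ desA m σ

/-- The relation `u ⇀ w` on `X_n`. -/
def covRel (n : ℕ) (u w : Equiv.Perm ℤ) : Prop :=
  InXn n u ∧ InXn n w ∧
    ((2 ≤ w 1 ∧ u = w * Equiv.swap (1 : ℤ) (-1)) ∨
     (∃ i : ℤ, 1 ≤ i ∧ i ≤ (n : ℤ) - 1 ∧ Lll (w i) (w (i + 1)) ∧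
        u = w * (Equiv.swap i (i + 1) * Equiv.swap (-i) (-(i + 1)))) ∨
     (w (n : ℤ) ≤ -2 ∧ u = w * Equiv.swap (n : ℤ) (-(n : ℤ))))

/-- The `i`-th coordinate (`1 ≤ i ≤ n`) of the vertex `v^j(w)` (`1 ≤ j ≤ n+1`):
`v^{n+1}_i(w) = #({1,…,i-1} ∩ CDes(w⁻¹))` and `v^j = v^{j+1} + ½ e_{w_j}`. -/
noncomputable def vcoord (n : ℕ) (w : Equiv.Perm ℤ) (j : ℕ) (i : ℕ) : ℚ :=
  ((Finset.Icc (1 : ℤ) ((i : ℤ) - 1) ∩ cdesSet n w.symm).card : ℚ)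
    + (1 / 2) * ∑ m ∈ Finset.Icc (j : ℤ) (n : ℤ),
        (if w m = (i : ℤ) then (1 : ℚ) else if w m = -(i : ℤ) then -1 else 0)

/-- `u` is the image `τ_n(w)`: in window notation `u = 1 w'_1 ⋯ w'_n`, where
`w'_i = w_i + 1` if `w_i > 0` and `w'_i = w_i - 1` if `w_i < 0`. -/
def isTau (n : ℕ) (w u : Equiv.Perm ℤ) : Prop :=
  u 1 = 1 ∧ ∀ i : ℤ, 1 ≤ i → i ≤ (n : ℤ) →
    u (i + 1) = if 0 < w i then w i + 1 else w i - 1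


/-!
For `n = ν + 1`, `L'_{n,k}(r)` counts the points of the box `[0, r] × [0, 2r]^ν` whose coordinate
sum `m` lies in the `k`-th window, and `m` lies in the window of index `max 1 ⌈m/r⌉`. Hence
`s · Σ_k L'_{n,k+1}(r) s^k = V_ν + s - 1`, where `V_ν = Σ_m e_m s^{⌈m/r⌉}` and
`E_ν = Σ_m e_m t^m = (1 + ⋯ + t^r)(1 + ⋯ + t^{2r})^ν` is the generating polynomial of the sums.

To sum `V_ν u^ν`, refine the weight of `t^m` to `s^{⌈m/r⌉} T^{r⌈m/r⌉ - m}`, recording how far `m`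
is below the next multiple of `r`. Multiplying `E_ν` by `1 + ⋯ + t^{2r}` then gives the linear
recursion `(1 - T) τ_{ν+1} = (1 + s)(1 - s T^r) V_ν + (s² - T) τ_ν` for the refined sums `τ_ν`.
At `T = (1 - s²u)/(1 - u)` one has `(1 - u)(1 - T) = u (s² - 1)` and `(1 - u)(s² - T) = s² - 1`,
so the recursion telescopes in `ℤ[s]⟦u⟧` (the kernel method) to
`(1 - s²) τ_0 = (1 - u)(1 + s)(1 - s T^r) Σ_ν V_ν u^ν`, with `τ_0 = 1 + s (1 + T + ⋯ + T^{r-1})`.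
-/

open Finset

namespace TypeCHypersimplex

lemma le_ceilDiv_mul {r : ℕ} (hr : 0 < r) (m : ℕ) : m ≤ m ⌈/⌉ r * r := by
  simpa [mul_comm] using le_smul_ceilDiv (b := m) hr

lemma ceilDiv_mul_lt_add {r : ℕ} (hr : 0 < r) (m : ℕ) : m ⌈/⌉ r * r < m + r := by
  have := Nat.div_mul_le_self (m + r - 1) r
  rw [Nat.ceilDiv_eq_add_pred_div]
  omega

lemma ceilDiv_eq_of_add_eq {r m d k : ℕ} (h : m + d = k * r) (hd : d < r) : m ⌈/⌉ r = k := by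
  have hr : 0 < r := by omega
  have hle := le_ceilDiv_mul hr m
  have hlt := ceilDiv_mul_lt_add hr m
  have h1 : m ⌈/⌉ r * r < (k + 1) * r := by rw [add_mul]; omega
  have h2 : k * r < (m ⌈/⌉ r + 1) * r := by rw [add_mul]; omega
  have := Nat.lt_of_mul_lt_mul_right h1
  have := Nat.lt_of_mul_lt_mul_right h2
  omega

lemma ceilDiv_sub_one_eq_iff {r m k : ℕ} (h : 0 < r ∨ m = 0) :
    m ⌈/⌉ r - 1 = k ↔ if k = 0 then m ≤ r else k * r < m ∧ m ≤ (k + 1) * r := by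
  rcases h with hr | rfl
  · have h1 := ceilDiv_le_iff_le_mul (b := m) (c := 1) hr
    have hk := ceilDiv_le_iff_le_mul (b := m) (c := k) hr
    have hk1 := ceilDiv_le_iff_le_mul (b := m) (c := k + 1) hr
    rw [mul_comm r] at hk hk1
    split_ifs <;> omega
  · rw [zero_ceilDiv, zero_tsub]
    split_ifs <;> omega

section CeilWeight

variable {R : Type*} [CommRing R] (s T : R)

def ceilWeight (r m : ℕ) : R := s ^ (m ⌈/⌉ r) * T ^ (m ⌈/⌉ r * r - m)

lemma ceilWeight_eq {r m d k : ℕ} (h : m + d = k * r) (hd : d < r) :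
    ceilWeight s T r m = s ^ k * T ^ d := by
  rw [ceilWeight, ceilDiv_eq_of_add_eq h hd]
  congr 2
  omega

lemma ceilWeight_zero (r : ℕ) : ceilWeight s T r 0 = 1 := by simp [ceilWeight]

lemma one_sub_mul_sum_ceilWeight_block {r m e k n : ℕ} (h : m + e = k * r) (he : e < r)
    (hn : n ≤ e + 1) :
    (1 - T) * ∑ j ∈ range n, ceilWeight s T r (m + j)
      = s ^ k * (T ^ (e + 1 - n) - T ^ (e + 1)) := by
  have hterm : ∀ j ∈ range n,
      ceilWeight s T r (m + j) = s ^ k * T ^ (e + 1 - n) * T ^ (n - 1 - j) := by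
    intro j hj
    rw [mem_range] at hj
    rw [ceilWeight_eq s T (d := e - j) (k := k) (by omega) (by omega), mul_assoc, ← pow_add]
    congr 2
    omega
  rw [sum_congr rfl hterm, ← mul_sum, sum_range_reflect (fun j => T ^ j) n]
  have hpow : T ^ (e + 1 - n) * T ^ n = T ^ (e + 1) := by rw [← pow_add, Nat.sub_add_cancel hn]
  linear_combination s ^ k * T ^ (e + 1 - n) * mul_neg_geom_sum T n - s ^ k * hpow

/-- The levels `m, …, m + 2r` split into the rest of the block of `r` consecutive levels
containing `m`, one full block, and the start of the next block. -/
lemma one_sub_mul_sum_ceilWeight (r m : ℕ) :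
    (1 - T) * ∑ j ∈ range (2 * r + 1), ceilWeight s T r (m + j)
      = (1 + s) * (1 - s * T ^ r) * s ^ (m ⌈/⌉ r) + (s ^ 2 - T) * ceilWeight s T r m := by
  rcases r.eq_zero_or_pos with rfl | hr
  · simp only [ceilWeight, ceilDiv_zero, zero_tsub, mul_zero, pow_zero, mul_one, zero_add,
      sum_range_one]
    ring
  have hle := le_ceilDiv_mul hr m
  have hlt := ceilDiv_mul_lt_add hr m
  set k := m ⌈/⌉ r
  set d := k * r - m
  have hkd : m + d = k * r := by omega
  have hd : d < r := by omega
  have B1 := one_sub_mul_sum_ceilWeight_block s T hkd hd le_rfl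
  have B2 := one_sub_mul_sum_ceilWeight_block s T (r := r) (m := m + (d + 1)) (e := r - 1)
    (k := k + 1) (n := r) (by rw [add_mul]; omega) (by omega) (by omega)
  have B3 := one_sub_mul_sum_ceilWeight_block s T (r := r) (m := m + (d + 1) + r) (e := r - 1)
    (k := k + 2) (n := r - d) (by rw [add_mul]; omega) (by omega) (by omega)
  simp only [Nat.sub_self, Nat.sub_add_cancel hr, Nat.sub_sub_self hd.le] at B1 B2 B3
  rw [show 2 * r + 1 = d + 1 + (r + (r - d)) by omega, sum_range_add _ (d + 1), sum_range_add _ r,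
    ceilWeight_eq s T hkd hd]
  simp only [← add_assoc] at B2 B3 ⊢
  linear_combination B1 + B2 + B3

end CeilWeight

section MonomialLift

open Polynomial

variable {M : Type*} [AddCommGroup M]

def monomialLift (ψ : ℕ → M) : ℤ[X] →ₗ[ℤ] M :=
  lsum fun m => LinearMap.toSpanSingleton ℤ M (ψ m)

lemma monomialLift_X_pow (ψ : ℕ → M) (m : ℕ) : monomialLift ψ (X ^ m) = ψ m := by
  simp [monomialLift, X_pow_eq_monomial, sum_monomial_index]

lemma map_monomialLift {N F : Type*} [AddCommGroup N] [FunLike F M N] [AddMonoidHomClass F M N]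
    (g : F) (ψ : ℕ → M) (f : ℤ[X]) : g (monomialLift ψ f) = monomialLift (g ∘ ψ) f := by
  simp [monomialLift, Polynomial.sum_def, map_zsmul]

noncomputable def boxPoly (r ν : ℕ) : ℤ[X] :=
  (∑ i ∈ range (r + 1), X ^ i) * (∑ i ∈ range (2 * r + 1), X ^ i) ^ ν

end MonomialLift

section Recursion

open Polynomial

variable {R : Type*} [CommRing R] (r : ℕ) (s T : R)

lemma one_sub_mul_monomialLift_mul_geom_sum (f : ℤ[X]) :
    (1 - T) * monomialLift (ceilWeight s T r) (f * ∑ i ∈ range (2 * r + 1), X ^ i)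
      = (1 + s) * (1 - s * T ^ r) * monomialLift (fun m => s ^ (m ⌈/⌉ r)) f
        + (s ^ 2 - T) * monomialLift (ceilWeight s T r) f := by
  induction f using Polynomial.induction_on' with
  | add p q hp hq =>
    simp only [add_mul, map_add]
    linear_combination hp + hq
  | monomial m a =>
    rw [← smul_X_eq_monomial, smul_mul_assoc, map_smul, map_smul, map_smul, mul_sum]
    simp only [← pow_add, map_sum, monomialLift_X_pow, zsmul_eq_mul]
    linear_combination (a : R) * one_sub_mul_sum_ceilWeight s T r m

lemma one_sub_mul_monomialLift_boxPoly_succ (ν : ℕ) :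
    (1 - T) * monomialLift (ceilWeight s T r) (boxPoly r (ν + 1))
      = (1 + s) * (1 - s * T ^ r) * monomialLift (fun m => s ^ (m ⌈/⌉ r)) (boxPoly r ν)
        + (s ^ 2 - T) * monomialLift (ceilWeight s T r) (boxPoly r ν) := by
  rw [← one_sub_mul_monomialLift_mul_geom_sum, boxPoly, boxPoly, pow_succ, mul_assoc]

lemma monomialLift_ceilWeight_boxPoly_zero :
    monomialLift (ceilWeight s T r) (boxPoly r 0) = 1 + s * ∑ i ∈ range r, T ^ i := by
  have hterm : ∀ i ∈ range r, ceilWeight s T r (i + 1) = s * T ^ (r - 1 - i) := by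
    intro i hi
    rw [mem_range] at hi
    rw [ceilWeight_eq s T (k := 1) (d := r - 1 - i) (by omega) (by omega), pow_one]
  rw [boxPoly, pow_zero, mul_one, map_sum, sum_range_succ']
  simp only [monomialLift_X_pow, ceilWeight_zero]
  rw [sum_congr rfl hterm, ← mul_sum, sum_range_reflect (fun i => T ^ i) r, add_comm]

end Recursion

section KernelMethod

open PowerSeries

variable {S : Type*} [CommRing S]

lemma add_mul_mk_eq_zero_of_X_mul_sub {a : ℕ → S⟦X⟧} {B : S⟦X⟧} {v : ℕ → S}
    (h : ∀ ν, X * a (ν + 1) - a ν = B * C (v ν)) : a 0 + B * PowerSeries.mk v = 0 := by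
  have key : ∀ N,
      a 0 + B * PowerSeries.mk v = X ^ N * (a N + B * PowerSeries.mk fun i => v (i + N)) := by
    intro N
    induction N with
    | zero => simp
    | succ N ih =>
      have hshift : (PowerSeries.mk fun i => v (i + N))
          = X * (PowerSeries.mk fun i => v (i + (N + 1))) + C (v N) := by
        conv_lhs => rw [eq_X_mul_shift_add_const (PowerSeries.mk fun i => v (i + N))]
        simp only [coeff_mk, constantCoeff_mk, zero_add, add_assoc, add_comm 1 N]
      rw [ih, hshift]
      linear_combination -X ^ N * h N
  ext n
  rw [key (n + 1), coeff_X_pow_mul', if_neg (by omega), map_zero]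

lemma kernel_equation (r : ℕ) (σ : S) {T : S⟦X⟧} (hT : (1 - X) * T = 1 - C σ ^ 2 * X) :
    (C σ ^ 2 - 1) * monomialLift (ceilWeight (C σ) T r) (boxPoly r 0)
      + (1 - X) * ((1 + C σ) * (1 - C σ * T ^ r))
        * PowerSeries.mk (fun ν => monomialLift (fun m => σ ^ (m ⌈/⌉ r)) (boxPoly r ν)) = 0 := by
  refine add_mul_mk_eq_zero_of_X_mul_sub
    (a := fun ν => (C σ ^ 2 - 1) * monomialLift (ceilWeight (C σ) T r) (boxPoly r ν)) fun ν => ?_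
  have hstep := one_sub_mul_monomialLift_boxPoly_succ r (C σ : S⟦X⟧) T ν
  rw [map_monomialLift]
  simp only [Function.comp_def, map_pow]
  linear_combination (1 - X) * hstep
    + (monomialLift (ceilWeight (C σ) T r) (boxPoly r (ν + 1))
      - monomialLift (ceilWeight (C σ) T r) (boxPoly r ν)) * hT

end KernelMethod

section Box

open Polynomial

def box (n r : ℕ) : Finset (Fin n → ℕ) :=
  Fintype.piFinset fun j => range (if (j : ℕ) = 0 then r + 1 else 2 * r + 1)

lemma zero_mem_box (n r : ℕ) : 0 ∈ box n r :=
  Fintype.mem_piFinset.2 fun j => by split_ifs <;> simp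

lemma pos_or_sum_eq_zero_of_mem_box {n r : ℕ} {x : Fin n → ℕ} (hx : x ∈ box n r) :
    0 < r ∨ ∑ j, x j = 0 := by
  refine r.eq_zero_or_pos.symm.imp_right fun hr => sum_eq_zero fun j _ => ?_
  have := Fintype.mem_piFinset.1 hx j
  simp only [hr, mem_range] at this
  split_ifs at this <;> omega

lemma sum_box_eq_monomialLift {M : Type*} [AddCommGroup M] (ψ : ℕ → M) (r ν : ℕ) :
    ∑ x ∈ box (ν + 1) r, ψ (∑ j, x j) = monomialLift ψ (boxPoly r ν) := by
  have hprod : ∏ j : Fin (ν + 1),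
      ∑ i ∈ range (if (j : ℕ) = 0 then r + 1 else 2 * r + 1), (X : ℤ[X]) ^ i = boxPoly r ν := by
    simp [Fin.prod_univ_succ, boxPoly]
  rw [← hprod, prod_univ_sum, map_sum, box]
  simp only [prod_pow_eq_pow_sum, monomialLift_X_pow]

lemma ncard_setOf_eq_card_box (n r : ℕ) (P : ℤ → Prop) [DecidablePred P] :
    {y : Fin n → ℤ |
      (∀ j, 0 ≤ y j ∧ y j ≤ 2 * (r : ℤ)) ∧ (∀ j : Fin n, (j : ℕ) = 0 → y j ≤ (r : ℤ)) ∧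
      P (∑ j, y j)}.ncard = #{x ∈ box n r | P (∑ j, x j : ℕ)} := by
  have hinj : Function.Injective fun (x : Fin n → ℕ) j => (x j : ℤ) :=
    fun x x' h => funext fun j => by simpa using congrFun h j
  rw [← Set.ncard_coe_finset, ← Set.ncard_image_of_injective _ hinj]
  congr 1
  ext y
  simp only [box, Set.mem_ofPred_eq, Set.mem_image, coe_filter, Fintype.mem_piFinset, mem_range]
  constructor
  · rintro ⟨hy, hy0, hP⟩
    refine ⟨fun j => (y j).toNat, ⟨fun j => ?_, ?_⟩,
      funext fun j => Int.toNat_of_nonneg (hy j).1⟩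
    · dsimp only
      have := hy j
      have := hy0 j
      split_ifs at * <;> omega
    · convert hP using 2
      push_cast
      exact sum_congr rfl fun j _ => Int.toNat_of_nonneg (hy j).1
  · rintro ⟨x, ⟨hx, hP⟩, rfl⟩
    dsimp only
    refine ⟨fun j => ?_, fun j hj => ?_, by exact_mod_cast hP⟩
    · have := hx j
      split_ifs at this <;> omega
    · have := hx j
      rw [if_pos hj] at this
      omega

/-- The subtraction is truncated, so the sum `0` falls into the window `k = 0` of sums `≤ r`. -/
lemma Lp_succ_eq_card (n k r : ℕ) :
    Lp n (k + 1) r = #{x ∈ box n r | (∑ j, x j) ⌈/⌉ r - 1 = k} := by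
  unfold Lp
  split_ifs with hk
  · refine (ncard_setOf_eq_card_box n r fun z => 0 ≤ z ∧ z ≤ r).trans (congrArg card ?_)
    refine filter_congr fun x hx => ?_
    rw [ceilDiv_sub_one_eq_iff (pos_or_sum_eq_zero_of_mem_box hx), if_pos (by omega)]
    exact ⟨fun h => by exact_mod_cast h.2, fun h => ⟨by positivity, by exact_mod_cast h⟩⟩
  · refine (ncard_setOf_eq_card_box n r fun z =>
      (((k + 1 : ℕ) : ℤ) - 1) * r < z ∧ z ≤ ((k + 1 : ℕ) : ℤ) * r).trans (congrArg card ?_)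
    refine filter_congr fun x hx => ?_
    rw [ceilDiv_sub_one_eq_iff (pos_or_sum_eq_zero_of_mem_box hx), if_neg (by omega),
      Nat.cast_succ, add_sub_cancel_right]
    norm_cast

lemma finsum_card_filter_mul_pow {α R : Type*} [CommSemiring R] (s : Finset α) (g : α → ℕ)
    (t : R) : ∑ᶠ k, (#{x ∈ s | g x = k} : R) * t ^ k = ∑ x ∈ s, t ^ g x := by
  rw [sum_comp (fun k => t ^ k) g, finsum_eq_sum_of_support_subset (s := s.image g)]
  · simp only [nsmul_eq_mul]
  · intro k hk
    by_contra hks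
    have hempty : #{x ∈ s | g x = k} = 0 :=
      card_eq_zero.2 (filter_eq_empty_iff.2 fun x hx hgx => hks (hgx ▸ mem_image_of_mem g hx))
    simp [hempty] at hk

lemma X_mul_finsum_Lp (r ν : ℕ) :
    X * ∑ᶠ k : ℕ, (Lp (ν + 1) (k + 1) r : ℤ[X]) * X ^ k
      = monomialLift (fun m => X ^ (m ⌈/⌉ r)) (boxPoly r ν) + X - 1 := by
  simp_rw [Lp_succ_eq_card]
  rw [finsum_card_filter_mul_pow, mul_sum, ← sum_box_eq_monomialLift]
  have hterm : ∀ x ∈ box (ν + 1) r, X * X ^ ((∑ j, x j) ⌈/⌉ r - 1)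
      = X ^ ((∑ j, x j) ⌈/⌉ r) + if x = 0 then (X - 1 : ℤ[X]) else 0 := by
    intro x hx
    split_ifs with h0
    · simp [h0]
    · obtain hr | hsum := pos_or_sum_eq_zero_of_mem_box hx
      · have hpos : 0 < (∑ j, x j) ⌈/⌉ r := by
          by_contra! hle
          have := (ceilDiv_le_iff_le_mul hr).1 hle
          exact h0 (funext fun j => by simpa using (sum_eq_zero_iff.1 (by omega)) j (mem_univ j))
        rw [← pow_succ', Nat.sub_add_cancel hpos, add_zero]
      · exact absurd (funext fun j => sum_eq_zero_iff.1 hsum j (mem_univ j)) h0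
  rw [sum_congr rfl hterm, sum_add_distrib, sum_ite_eq' _ _ (fun _ => X - 1),
    if_pos (zero_mem_box _ r), add_sub_assoc]

lemma C_X_mul_mk_finsum_Lp (r : ℕ) :
    PowerSeries.C X * PowerSeries.mk (fun n => if n = 0 then 0 else
        ∑ᶠ k : ℕ, (Lp n (k + 1) r : ℤ[X]) * X ^ k)
      = PowerSeries.X
          * PowerSeries.mk (fun ν => monomialLift (fun m => X ^ (m ⌈/⌉ r)) (boxPoly r ν))
        + PowerSeries.C (X - 1) * (PowerSeries.X * PowerSeries.mk 1) := by
  refine PowerSeries.ext fun n => ?_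
  rcases n with _ | ν
  · simp
  · rw [map_add, PowerSeries.coeff_C_mul, PowerSeries.coeff_C_mul, PowerSeries.coeff_succ_X_mul,
      PowerSeries.coeff_succ_X_mul]
    simp only [PowerSeries.coeff_mk, Nat.succ_ne_zero, if_false, Pi.one_apply, mul_one,
      X_mul_finsum_Lp]
    ring

end Box

end TypeCHypersimplex

open TypeCHypersimplex in
/-- Proposition, generating function of the Ehrhart counts.
Fix `r ≥ 0`. In `ℤ[s]⟦u⟧`, with
`F_r(s,u) = Σ_{n≥1} (Σ_{k≥0} L'_{n,k+1}(r) s^k) uⁿ`, one has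
`(1+s)((1-u)^{r+1} - s(1-u)(1-s²u)^r) F_r = (1-s²u)^{r+1} - (1-u)^{r+1}`. -/
theorem gen_fun_ehrhart (r : ℕ) :
    letI s : PowerSeries (Polynomial ℤ) := PowerSeries.C (R := Polynomial ℤ) Polynomial.X
    letI u : PowerSeries (Polynomial ℤ) := PowerSeries.X
    letI F : PowerSeries (Polynomial ℤ) := PowerSeries.mk fun n =>
      if n = 0 then 0 else
        ∑ᶠ k : ℕ, (Lp n (k + 1) r : Polynomial ℤ) * Polynomial.X ^ k
    (1 + s) * ((1 - u) ^ (r + 1) - s * (1 - u) * (1 - s ^ 2 * u) ^ r) * F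
      = (1 - s ^ 2 * u) ^ (r + 1) - (1 - u) ^ (r + 1) := by
  have hI : (1 - PowerSeries.X) * PowerSeries.mk 1 = (1 : PowerSeries (Polynomial ℤ)) := by
    rw [mul_comm, PowerSeries.mk_one_mul_one_sub_eq_one]
  obtain ⟨T, hT⟩ : ∃ T : PowerSeries (Polynomial ℤ),
      (1 - PowerSeries.X) * T = 1 - PowerSeries.C Polynomial.X ^ 2 * PowerSeries.X :=
    ⟨(1 - PowerSeries.C Polynomial.X ^ 2 * PowerSeries.X) * PowerSeries.mk 1,
      by rw [mul_left_comm, hI, mul_one]⟩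
  have hker := kernel_equation r Polynomial.X hT
  have hτ := monomialLift_ceilWeight_boxPoly_zero r (PowerSeries.C (Polynomial.X : Polynomial ℤ)) T
  have hF := C_X_mul_mk_finsum_Lp r
  rw [map_sub, map_one] at hF
  have hG := geom_sum_mul T r
  refine mul_left_cancel₀ ((map_ne_zero_iff _ PowerSeries.C_injective).2 Polynomial.X_ne_zero) ?_
  simp only [← hT, mul_pow]
  set s : PowerSeries (Polynomial ℤ) := PowerSeries.C Polynomial.X
  set P : PowerSeries (Polynomial ℤ) := 1 - PowerSeries.X
  linear_combination (1 + s) * P ^ (r + 1) * (1 - s * T ^ r) * hF + PowerSeries.X * P ^ r * hker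
    + (s ^ 2 - 1) * PowerSeries.X * P ^ r * (1 - s * T ^ r) * hI
    - (s ^ 2 - 1) * PowerSeries.X * P ^ r * hτ - s * P ^ r * (∑ i ∈ range r, T ^ i + T ^ r) * hT
    + s * P ^ (r + 1) * hG
end

section
/- For all n ≥ 1 and k ≥ 1, B_{n,k} = #{w ∈ X_n : fexc(w) = 2k−2} + 2·#{w ∈ X_n : fexc(w) = 2k−1} + #{w ∈ X_n : fexc(w) = 2k}. (Equivalently, the type B Eulerian number B_{n,k} equals Vol(Δ_{C_n,2k−1}) + 2·Vol(Δ_{C_n,2k}) + Vol(Δ_{C_n,2k+1}), where the volume of a nonexistent hypersimplex is 0.) -/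
open scoped Classical

/-!
Encode a signed permutation as a pair `(σ, ε)` of a permutation of `Fin n` and a sign vector.
Summing over the signs, `Σ_w t^{fexc w} = (1 + t)^n A_n(t)`, where `A_n(t) = Σ_σ t^{exc σ}`.
Inserting the entry `±(n+1)` into a window gives
`B_{n+1}(t) = (1 + (2n+1)t) B_n(t) + 2t(1-t) B_n'(t)` for `B_n(t) = Σ_w t^{des_B w}`, while
inserting a new letter into the cycles of `σ` gives `A_{n+1} = (1 + nt) A_n + t(1-t) A_n'`; hence
`Q_n = (1+t)^{n+1} A_n` obeys the same recurrence in `t²`, and `B_{n,k} = [t^{2k}] Q_n`, which is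
`#{fexc = 2k-1} + #{fexc = 2k}`. Finally, changing the sign of the entry `±1` matches
`{fexc = m}` outside `X_n` with `{fexc = m - 1}` inside `X_n`.
-/

open Finset Polynomial

section Words

variable {α : Type*} [LT α] [DecidableRel (α := α) (· < ·)]

def descentCount {m : ℕ} (g : Fin (m + 1) → α) : ℕ := #{i : Fin m | g i.succ < g i.castSucc}

lemma descentCount_cons {m : ℕ} (a : α) (g : Fin (m + 1) → α) :
    descentCount (Fin.cons a g : Fin (m + 2) → α)
      = (if g 0 < a then 1 else 0) + descentCount g := by
  rw [descentCount, descentCount, Fin.card_filter_univ_succ']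
  simp only [Fin.cons_succ, Fin.castSucc_zero, Fin.cons_zero, ← Fin.succ_castSucc]

lemma descentCount_snoc {m : ℕ} (g : Fin (m + 1) → α) (v : α) :
    descentCount (Fin.snoc g v : Fin (m + 2) → α)
      = descentCount g + if v < g (Fin.last m) then 1 else 0 := by
  rw [descentCount, descentCount, card_filter, card_filter, Fin.sum_univ_castSucc]
  simp only [Fin.succ_last, Fin.snoc_last, Fin.snoc_castSucc, Fin.succ_castSucc]

lemma descentCount_insertNth {m : ℕ} (g : Fin (m + 1) → α) (i : Fin m) (v : α) :
    descentCount (Fin.insertNth i.succ.castSucc v g) + (if g i.succ < g i.castSucc then 1 else 0)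
      = descentCount g + (if v < g i.castSucc then 1 else 0) + if g i.succ < v then 1 else 0 := by
  induction m with
  | zero => exact i.elim0
  | succ m ih =>
    obtain ⟨a, t, rfl⟩ : ∃ a t, g = Fin.cons a t :=
      ⟨g 0, Fin.tail g, (Fin.cons_self_tail g).symm⟩
    cases i using Fin.cases with
    | zero =>
      simp only [← Fin.succ_castSucc, Fin.castSucc_zero, Fin.insertNth_succ_cons,
        Fin.insertNth_zero', descentCount_cons, Fin.cons_succ, Fin.cons_zero]
      ring
    | succ i =>
      have h0 : (Fin.insertNth i.succ.castSucc v t : Fin (m + 2) → α) 0 = t 0 := by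
        simpa [← Fin.succ_castSucc] using
          Fin.insertNth_apply_succAbove (α := fun _ => α) i.succ.castSucc v t 0
      have := ih t i
      simp only [← Fin.succ_castSucc, Fin.insertNth_succ_cons, descentCount_cons, Fin.cons_succ]
        at this h0 ⊢
      rw [h0]
      omega

end Words

lemma Fin.insertNth_injective {α : Type*} {n : ℕ} {p : Fin (n + 1)} {a : α} {f : Fin n → α}
    (hf : Function.Injective f) (ha : a ∉ Set.range f) :
    Function.Injective (Fin.insertNth p a f) := by
  intro i j h
  cases i using Fin.succAboveCases p <;> cases j using Fin.succAboveCases p <;>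
    simp only [Fin.insertNth_apply_same, Fin.insertNth_apply_succAbove] at h
  · rfl
  · exact (ha ⟨_, h.symm⟩).elim
  · exact (ha ⟨_, h⟩).elim
  · rw [hf h]

lemma card_filter_Icc_one {n : ℕ} (P : ℤ → Prop) [DecidablePred P] :
    #{i ∈ Icc (1 : ℤ) n | P i} = #{a : Fin n | P (a + 1)} := by
  symm
  refine card_nbij (fun a : Fin n => (a : ℤ) + 1) (fun a ha => ?_) (fun a _ b _ h => ?_)
    (fun i hi => ?_)
  · simp only [coe_filter, mem_univ, true_and, Set.mem_ofPred_eq, mem_Icc] at ha ⊢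
    exact ⟨⟨by omega, by omega⟩, ha⟩
  · exact Fin.ext (by simpa using h)
  · simp only [coe_filter, mem_Icc, Set.mem_ofPred_eq] at hi
    have hi' : ((i - 1).toNat : ℤ) + 1 = i := by omega
    exact ⟨⟨(i - 1).toNat, by omega⟩,
      by simpa only [coe_filter, mem_univ, true_and, Set.mem_ofPred_eq, hi'] using hi.2,
      by simpa using hi'⟩

lemma coeff_sum_X_pow {R ι : Type*} [Semiring R] (s : Finset ι) (f : ι → ℕ) (k : ℕ) :
    (∑ i ∈ s, (X : R[X]) ^ f i).coeff k = #{i ∈ s | f i = k} := by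
  rw [finsetSum_coeff, card_filter, Nat.cast_sum]
  refine sum_congr rfl fun i _ => ?_
  simp [coeff_X_pow, eq_comm]

lemma X_mul_derivative_X_pow {R : Type*} [CommSemiring R] (d : ℕ) :
    X * derivative (X ^ d : R[X]) = (d : R[X]) * X ^ d := by
  cases d with
  | zero => simp
  | succ d => rw [derivative_X_pow, C_eq_natCast, Nat.add_sub_cancel]; ring

lemma coeff_X_mul_derivative {R : Type*} [Semiring R] (p : R[X]) (m : ℕ) :
    (X * derivative p).coeff m = (m : R) * p.coeff m := by
  cases m with
  | zero => simp
  | succ m => rw [coeff_X_mul, coeff_derivative, ← Nat.cast_succ, Nat.cast_comm]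

noncomputable def eulerStep (c : ℤ) (P : ℤ[X]) : ℤ[X] :=
  (1 + C c * X) * P + 2 * (1 - X) * (X * derivative P)

/-- `eulerStep c` conjugated by the substitution `t ↦ t²`. -/
noncomputable def eulerStepSq (c : ℤ) (Q : ℤ[X]) : ℤ[X] :=
  (1 + C c * X ^ 2) * Q + (1 - X ^ 2) * (X * derivative Q)

lemma coeff_eulerStep_zero (c : ℤ) (P : ℤ[X]) : (eulerStep c P).coeff 0 = P.coeff 0 := by
  simp [eulerStep, add_mul, sub_mul, mul_sub]

lemma coeff_eulerStep_succ (c : ℤ) (P : ℤ[X]) (k : ℕ) :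
    (eulerStep c P).coeff (k + 1) = (2 * k + 3) * P.coeff (k + 1) + (c - 2 * k) * P.coeff k := by
  have e : eulerStep c P
      = P + C c * (X * P) + C 2 * (X * derivative P) - C 2 * (X * (X * derivative P)) := by
    rw [eulerStep, C_ofNat]; ring
  simp only [e, coeff_add, coeff_sub, coeff_C_mul, coeff_X_mul, coeff_X_mul_derivative,
    coeff_derivative]
  ring

lemma coeff_eulerStepSq_zero (c : ℤ) (Q : ℤ[X]) : (eulerStepSq c Q).coeff 0 = Q.coeff 0 := by
  simp [eulerStepSq, add_mul, sub_mul, pow_two, mul_assoc]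

lemma coeff_eulerStepSq_add_two (c : ℤ) (Q : ℤ[X]) (m : ℕ) :
    (eulerStepSq c Q).coeff (m + 2) = (m + 3) * Q.coeff (m + 2) + (c - m) * Q.coeff m := by
  have e : eulerStepSq c Q
      = Q + C c * (X * (X * Q)) + X * derivative Q - X * (X * (X * derivative Q)) := by
    rw [eulerStepSq]; ring
  simp only [e, coeff_add, coeff_sub, coeff_C_mul, coeff_X_mul, coeff_X_mul_derivative,
    coeff_derivative]
  push_cast
  ring

lemma coeff_eq_coeff_two_mul_of_eulerStep {P Q : ℕ → ℤ[X]} (c : ℕ → ℤ)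
    (hP : ∀ n, P (n + 1) = eulerStep (c n) (P n))
    (hQ : ∀ n, Q (n + 1) = eulerStepSq (c n) (Q n))
    (h0 : ∀ k, (P 0).coeff k = (Q 0).coeff (2 * k)) (n k : ℕ) :
    (P n).coeff k = (Q n).coeff (2 * k) := by
  induction n generalizing k with
  | zero => exact h0 k
  | succ n ih =>
    cases k with
    | zero => rw [hP, hQ, coeff_eulerStep_zero, coeff_eulerStepSq_zero, ih]
    | succ k =>
      rw [hP, hQ, coeff_eulerStep_succ, ih, ih, Nat.mul_succ, coeff_eulerStepSq_add_two]
      push_cast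
      ring

section Excedances

variable {n : ℕ}

noncomputable def exc (σ : Equiv.Perm (Fin n)) : ℕ := #{a | a < σ a}

noncomputable def excPoly (n : ℕ) : ℤ[X] := ∑ σ : Equiv.Perm (Fin n), X ^ exc σ

lemma card_symm_lt_self (τ : Equiv.Perm (Fin n)) : #{j | τ.symm j < j} = exc τ := by
  rw [exc, card_filter, card_filter, ← Equiv.sum_comp τ]
  simp

lemma exc_decomposeFin_symm_zero (τ : Equiv.Perm (Fin n)) :
    exc (Equiv.Perm.decomposeFin.symm (0, τ)) = exc τ := by
  simp only [exc, card_filter, Fin.sum_univ_succ, Equiv.Perm.decomposeFin_symm_apply_zero,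
    Equiv.Perm.decomposeFin_symm_apply_succ, Equiv.swap_self, Equiv.refl_apply,
    Fin.succ_lt_succ_iff]
  simp

/-- `decomposeFin.symm (j.succ, τ)` inserts `0` into the cycle of `τ` just before `j`. -/
lemma exc_decomposeFin_symm_succ (τ : Equiv.Perm (Fin n)) (j : Fin n) :
    exc (Equiv.Perm.decomposeFin.symm (j.succ, τ)) = exc τ + if τ.symm j < j then 0 else 1 := by
  simp only [exc, card_filter, Fin.sum_univ_succ, Equiv.Perm.decomposeFin_symm_apply_zero,
    Equiv.Perm.decomposeFin_symm_apply_succ]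
  set i₀ := τ.symm j
  have hτ : τ i₀ = j := τ.apply_symm_apply j
  have hrest : ∀ i ∈ univ.erase i₀,
      (if i.succ < Equiv.swap 0 j.succ (τ i).succ then 1 else 0) = if i < τ i then 1 else 0 :=
    fun i hi => by
    have : τ i ≠ j := fun h => ne_of_mem_erase hi (τ.injective (h.trans hτ.symm))
    simp only [Equiv.swap_apply_of_ne_of_ne (Fin.succ_ne_zero _)
      (fun h => this (Fin.succ_injective _ h)), Fin.succ_lt_succ_iff]
  rw [← add_sum_erase _ _ (mem_univ i₀), ← add_sum_erase _ _ (mem_univ i₀),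
    sum_congr rfl hrest, hτ, Equiv.swap_apply_right]
  simp only [Fin.succ_pos, if_true, Fin.not_lt_zero, if_false]
  split_ifs <;> omega

lemma sum_X_pow_exc_decomposeFin_symm (τ : Equiv.Perm (Fin n)) :
    ∑ p, (X : ℤ[X]) ^ exc (Equiv.Perm.decomposeFin.symm (p, τ))
      = ((exc τ : ℤ[X]) + 1) * X ^ exc τ
        + ((n : ℤ[X]) - (exc τ : ℤ[X])) * X ^ (exc τ + 1) := by
  have hcard := card_filter_add_card_filter_not (s := univ) fun j : Fin n => τ.symm j < j
  rw [card_symm_lt_self, card_univ, Fintype.card_fin] at hcard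
  simp only [Fin.sum_univ_succ, exc_decomposeFin_symm_zero, exc_decomposeFin_symm_succ,
    apply_ite (fun e => (X : ℤ[X]) ^ (exc τ + e)), add_zero, sum_ite, sum_const,
    card_symm_lt_self, nsmul_eq_mul]
  rw [show (#{j | ¬τ.symm j < j} : ℤ[X]) = n - exc τ by
    rw [eq_sub_iff_add_eq, add_comm]; exact_mod_cast hcard]
  ring

lemma excPoly_succ (n : ℕ) :
    excPoly (n + 1)
      = (1 + (n : ℤ[X]) * X) * excPoly n + (1 - X) * (X * derivative (excPoly n)) := by
  rw [excPoly, ← Equiv.Perm.decomposeFin.symm.sum_comp, Fintype.sum_prod_type, sum_comm,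
    excPoly, derivative_sum, mul_sum, mul_sum, mul_sum, ← sum_add_distrib]
  refine sum_congr rfl fun τ _ => ?_
  rw [sum_X_pow_exc_decomposeFin_symm, X_mul_derivative_X_pow]
  ring

lemma X_add_one_pow_mul_excPoly_succ (n : ℕ) :
    (X + 1) ^ (n + 2) * excPoly (n + 1)
      = eulerStepSq (2 * n + 1) ((X + 1) ^ (n + 1) * excPoly n) := by
  have hd : derivative ((X + 1) ^ (n + 1) * excPoly n)
      = ((n : ℤ[X]) + 1) * (X + 1) ^ n * excPoly n
        + (X + 1) ^ (n + 1) * derivative (excPoly n) := by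
    rw [derivative_mul, derivative_pow, derivative_add, derivative_X, derivative_one]
    simp
  rw [eulerStepSq, excPoly_succ, hd]
  simp only [map_add, map_mul, map_natCast, C_ofNat, map_one]
  ring

end Excedances

/-- `(σ, ε)` stands for the signed permutation with window `w_{a+1} = ±(σ a + 1)`, the sign
being `+` iff `ε a`. -/
abbrev SignedPerm (n : ℕ) := Equiv.Perm (Fin n) × (Fin n → Bool)

namespace SignedPerm

variable {n : ℕ}

def signedVal (a : Fin n) (b : Bool) : ℤ := if b then a + 1 else -(a + 1)

@[simp] lemma signedVal_true (a : Fin n) : signedVal a true = a + 1 := rfl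

@[simp] lemma signedVal_false (a : Fin n) : signedVal a false = -(a + 1) := rfl

@[simp] lemma signedVal_castSucc (a : Fin n) (b : Bool) : signedVal a.castSucc b = signedVal a b :=
  rfl

lemma signedVal_not (a : Fin n) (b : Bool) : signedVal a (!b) = -signedVal a b := by
  cases b <;> simp

lemma signedVal_pos_iff (a : Fin n) (b : Bool) : 0 < signedVal a b ↔ b = true := by
  cases b
  · simp only [signedVal_false, Bool.false_eq_true, iff_false, not_lt]
    omega
  · simp only [signedVal_true, iff_true]
    omega

lemma abs_signedVal (a : Fin n) (b : Bool) : |signedVal a b| = a + 1 := by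
  cases b <;> simp only [signedVal_true, signedVal_false, abs_neg] <;> exact abs_of_pos (by omega)

def signedValEmb : Fin n × Bool ↪ ℤ where
  toFun p := signedVal p.1 p.2
  inj' := by
    rintro ⟨a, b⟩ ⟨a', b'⟩ h
    obtain rfl : a = a' := Fin.ext (by simpa [abs_signedVal] using congrArg abs h)
    have := congrArg (0 < ·) h
    cases b <;> cases b' <;> simp_all <;> omega

@[simp] lemma signedValEmb_apply (p : Fin n × Bool) : signedValEmb p = signedVal p.1 p.2 := rfl

lemma mem_range_signedValEmb {j : ℤ} :
    j ∈ Set.range (signedValEmb (n := n)) ↔ j ≠ 0 ∧ |j| ≤ n := by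
  constructor
  · rintro ⟨⟨a, b⟩, rfl⟩
    have := abs_signedVal a b
    have := a.isLt
    simp only [signedValEmb_apply]
    exact ⟨abs_ne_zero.1 (by omega), by omega⟩
  · rintro ⟨h0, hn⟩
    rcases lt_or_gt_of_ne h0 with h | h
    · refine ⟨(⟨(-j - 1).toNat, by rw [abs_of_neg h] at hn; omega⟩, false), ?_⟩
      simp only [signedValEmb_apply, signedVal_false]
      omega
    · refine ⟨(⟨(j - 1).toNat, by rw [abs_of_pos h] at hn; omega⟩, true), ?_⟩
      simp only [signedValEmb_apply, signedVal_true]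
      omega

/-- Acts on `signedVal a b = ±(a+1)` as the signed permutation acts on `±(a+1)`. -/
def liftPerm (x : SignedPerm n) : Equiv.Perm (Fin n × Bool) where
  toFun p := (x.1 p.1, p.2 == x.2 p.1)
  invFun p := (x.1.symm p.1, p.2 == x.2 (x.1.symm p.1))
  left_inv p := by simp
  right_inv p := by simp

lemma liftPerm_injective : Function.Injective (liftPerm (n := n)) := by
  intro x y h
  have h' : ∀ a, x.1 a = y.1 a ∧ x.2 a = y.2 a := fun a => by
    simpa [liftPerm] using congrArg (· (a, true)) h
  exact Prod.ext (Equiv.ext fun a => (h' a).1) (funext fun a => (h' a).2)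

noncomputable def toPerm (x : SignedPerm n) : Equiv.Perm ℤ :=
  (liftPerm x).viaEmbedding signedValEmb

def word (x : SignedPerm n) (a : Fin n) : ℤ := signedVal (x.1 a) (x.2 a)

lemma toPerm_signedVal (x : SignedPerm n) (a : Fin n) (b : Bool) :
    toPerm x (signedVal a b) = signedVal (x.1 a) (b == x.2 a) :=
  Equiv.Perm.viaEmbedding_apply (liftPerm x) signedValEmb (a, b)

lemma toPerm_of_notMem (x : SignedPerm n) {j : ℤ} (hj : ¬ (j ≠ 0 ∧ |j| ≤ n)) :
    toPerm x j = j :=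
  Equiv.Perm.viaEmbedding_apply_of_notMem _ _ _ (mt mem_range_signedValEmb.1 hj)

lemma toPerm_succ (x : SignedPerm n) (a : Fin n) : toPerm x (a + 1) = word x a := by
  simpa [word] using toPerm_signedVal x a true

lemma toPerm_zero (x : SignedPerm n) : toPerm x 0 = 0 := toPerm_of_notMem x (by simp)

lemma isSignedPerm_toPerm (x : SignedPerm n) : IsSignedPerm n (toPerm x) := by
  refine ⟨fun j => ?_, fun j hj => toPerm_of_notMem x fun h => by omega⟩
  by_cases hj : j ∈ Set.range (signedValEmb (n := n))
  · obtain ⟨⟨a, b⟩, rfl⟩ := hj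
    simp only [signedValEmb_apply]
    rw [← signedVal_not, toPerm_signedVal, toPerm_signedVal, ← signedVal_not]
    cases b <;> simp
  · rw [mem_range_signedValEmb] at hj
    rw [toPerm_of_notMem x hj, toPerm_of_notMem x (by rwa [abs_neg, neg_ne_zero])]

lemma toPerm_injective : Function.Injective (toPerm (n := n)) :=
  fun _ _ h => liftPerm_injective (Equiv.Perm.viaEmbeddingHom_injective signedValEmb h)

lemma exists_toPerm_eq {w : Equiv.Perm ℤ} (hw : IsSignedPerm n w) :
    ∃ x : SignedPerm n, toPerm x = w := by
  obtain ⟨hodd, hfix⟩ := hw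
  have h0 : w 0 = 0 := by have := hodd 0; rw [neg_zero] at this; omega
  have hrange : ∀ a : Fin n, w (a + 1) ∈ Set.range (signedValEmb (n := n)) := by
    intro a
    rw [mem_range_signedValEmb]
    refine ⟨fun h => by have := w.injective (h.trans h0.symm); omega, not_lt.1 fun h => ?_⟩
    have := w.injective (hfix _ h)
    rw [this, abs_of_pos (by omega)] at h
    omega
  choose f hf using hrange
  simp only [signedValEmb_apply] at hf
  have hinj : Function.Injective fun a => (f a).1 := by
    intro a a' h
    have key : w (a + 1) = w (a' + 1) ∨ w (a + 1) = w (-(a' + 1)) := by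
      rw [hodd, ← hf, ← hf, ← signedVal_not]
      simp only at h
      rw [h]
      cases (f a).2 <;> cases (f a').2 <;> simp
    rcases key with key | key <;> have := w.injective key <;> omega
  refine ⟨(Equiv.ofBijective _ (Finite.injective_iff_bijective.1 hinj), fun a => (f a).2),
    Equiv.ext fun j => ?_⟩
  by_cases hj : j ∈ Set.range (signedValEmb (n := n))
  · obtain ⟨⟨a, b⟩, rfl⟩ := hj
    simp only [signedValEmb_apply, toPerm_signedVal, Equiv.ofBijective_apply]
    cases b
    · rw [Bool.false_beq, signedVal_not, hf, signedVal_false, hodd]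
    · rw [Bool.true_beq, hf, signedVal_true]
  · rw [mem_range_signedValEmb, not_and_or, not_not, not_le] at hj
    rw [toPerm_of_notMem _ (by omega)]
    rcases hj with rfl | hj
    · exact h0.symm
    · exact (hfix j hj).symm

lemma ncard_isSignedPerm_and (P : Equiv.Perm ℤ → Prop) :
    {w | IsSignedPerm n w ∧ P w}.ncard = #{x : SignedPerm n | P (toPerm x)} := by
  have : {w | IsSignedPerm n w ∧ P w} =
      toPerm '' {x : SignedPerm n | P (toPerm x)} := by
    ext w
    constructor
    · rintro ⟨hw, hP⟩
      obtain ⟨x, rfl⟩ := exists_toPerm_eq hw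
      exact ⟨x, by simpa using hP, rfl⟩
    · rintro ⟨x, hx, rfl⟩
      exact ⟨isSignedPerm_toPerm x, by simpa using hx⟩
  rw [this, Set.ncard_image_of_injective _ toPerm_injective, ← Set.ncard_coe_finset]
  simp

def zeroWord (x : SignedPerm n) : Fin (n + 1) → ℤ := Fin.cons 0 (word x)

lemma abs_zeroWord_le (x : SignedPerm n) (k : Fin (n + 1)) :
    |zeroWord x k| ≤ n := by
  rw [zeroWord]
  cases k using Fin.cases with
  | zero => simp
  | succ a =>
    rw [Fin.cons_succ, word, abs_signedVal]
    have := (x.1 a).isLt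
    omega

def des (x : SignedPerm n) : ℕ := descentCount (zeroWord x)

noncomputable def flagExc (x : SignedPerm n) : ℕ :=
  ∑ a, if x.2 a then (if a < x.1 a then 2 else 0) else 1

/-- `w⁻¹(1) > 0`. -/
def InX (x : SignedPerm (n + 1)) : Prop := x.2 (x.1.symm 0) = true

lemma toPerm_natCast (x : SignedPerm n) (i : Fin (n + 1)) :
    toPerm x (i : ℕ) = zeroWord x i := by
  refine Fin.cases ?_ (fun a => ?_) i
  · simpa [zeroWord] using toPerm_zero x
  · simpa [zeroWord] using toPerm_succ x a

lemma desB_toPerm (x : SignedPerm n) : desB n (toPerm x) = des x := by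
  simp only [desB, Finset.pure_def, Finset.bind_def, Finset.sup_singleton_apply,
    Finset.filter_image, Finset.card_image_of_injective _ Nat.cast_injective, ← Nat.Iio_eq_range,
    ← Fin.map_valEmbedding_univ, Finset.filter_map, Finset.card_map]
  simp only [des, descentCount, Function.comp_apply, Fin.valEmbedding_apply]
  congr! 3 with i
  · simpa using toPerm_natCast x i.succ
  · simpa using toPerm_natCast x i.castSucc

lemma fexc_toPerm (x : SignedPerm n) : fexc n (toPerm x) = flagExc x := by
  rw [fexc, card_filter_Icc_one, card_filter_Icc_one]
  simp only [toPerm_succ, card_filter, mul_sum, flagExc, ← sum_add_distrib]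
  refine sum_congr rfl fun a _ => ?_
  by_cases h : x.2 a <;>
    simp only [word, h, signedVal_true, signedVal_false, Fin.lt_def, Bool.false_eq_true, if_true,
      if_false] <;> split_ifs <;> omega

lemma zero_lt_toPerm_symm_one_iff (x : SignedPerm (n + 1)) : 0 < (toPerm x).symm 1 ↔ InX x := by
  have h : (toPerm x).symm 1 = signedVal (x.1.symm 0) (x.2 (x.1.symm 0)) := by
    rw [Equiv.symm_apply_eq, toPerm_signedVal]
    simp
  rw [h, signedVal_pos_iff, InX]

lemma sum_signs_X_pow_flagExc {R : Type*} [CommSemiring R] (σ : Equiv.Perm (Fin n)) :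
    ∑ ε : Fin n → Bool, (X : R[X]) ^ flagExc (σ, ε) = X ^ exc σ * (X + 1) ^ n := by
  calc ∑ ε : Fin n → Bool, (X : R[X]) ^ flagExc (σ, ε)
      = ∑ ε : Fin n → Bool,
          ∏ a, (X : R[X]) ^ (if ε a then (if a < σ a then 2 else 0) else 1) := by
        simp only [flagExc, prod_pow_eq_pow_sum]
    _ = ∏ a, ∑ b : Bool, (X : R[X]) ^ (if b then (if a < σ a then 2 else 0) else 1) := by
        rw [Fintype.prod_sum]
    _ = ∏ a, X ^ (if a < σ a then 1 else 0) * (X + 1) := by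
        refine prod_congr rfl fun a _ => ?_
        split_ifs <;> simp only [Fintype.sum_bool, if_true, Bool.false_eq_true, if_false] <;> ring
    _ = X ^ exc σ * (X + 1) ^ n := by
        rw [prod_mul_distrib, prod_pow_eq_pow_sum, prod_const, card_univ, Fintype.card_fin, exc,
          card_filter]

lemma sum_X_pow_flagExc {R : Type*} [CommSemiring R] :
    ∑ x : SignedPerm n, (X : R[X]) ^ flagExc x
      = (X + 1) ^ n * ∑ σ : Equiv.Perm (Fin n), X ^ exc σ := by
  simp only [Fintype.sum_prod_type, sum_signs_X_pow_flagExc, mul_sum, mul_comm]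

/-- Changes the sign of the entry `±1`. -/
def flipOne (x : SignedPerm (n + 1)) : SignedPerm (n + 1) :=
  (x.1, Function.update x.2 (x.1.symm 0) (!x.2 (x.1.symm 0)))

lemma flipOne_flipOne (x : SignedPerm (n + 1)) : flipOne (flipOne x) = x := by
  simp [flipOne]

lemma inX_flipOne (x : SignedPerm (n + 1)) : InX (flipOne x) ↔ ¬ InX x := by
  simp [flipOne, InX]

lemma flagExc_flipOne {x : SignedPerm (n + 1)} (hx : InX x) :
    flagExc (flipOne x) = flagExc x + 1 := by
  set q := x.1.symm 0
  have hq : x.1 q = 0 := x.1.apply_symm_apply 0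
  rw [flagExc, flagExc, ← add_sum_erase _ _ (mem_univ q), ← add_sum_erase _ _ (mem_univ q)]
  have hrest : ∀ a ∈ univ.erase q, (flipOne x).2 a = x.2 a := fun a ha =>
    Function.update_of_ne (ne_of_mem_erase ha) _ _
  rw [sum_congr rfl fun a ha => by rw [hrest a ha]]
  simp only [flipOne, show x.2 q = true from hx, Bool.not_true, Function.update_self,
    Bool.false_eq_true, if_true, if_false, hq, not_lt_zero, zero_add, q]
  ring

lemma card_flagExc_succ (m : ℕ) :
    #{x : SignedPerm (n + 1) | flagExc x = m + 1}
      = #{x : SignedPerm (n + 1) | InX x ∧ flagExc x = m + 1}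
        + #{x : SignedPerm (n + 1) | InX x ∧ flagExc x = m} := by
  rw [← card_filter_add_card_filter_not InX, filter_filter, filter_filter]
  congr 1
  · simp only [and_comm]
  · refine card_bij' (fun x _ => flipOne x) (fun x _ => flipOne x) ?_ ?_
      (fun x _ => flipOne_flipOne x) (fun x _ => flipOne_flipOne x)
    · intro x hx
      simp only [mem_filter, mem_univ, true_and] at hx ⊢
      have hy := (inX_flipOne x).2 hx.2
      have h := flagExc_flipOne hy
      rw [flipOne_flipOne] at h
      exact ⟨hy, by omega⟩
    · intro y hy
      simp only [mem_filter, mem_univ, true_and] at hy ⊢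
      rw [flagExc_flipOne hy.1, inX_flipOne]
      exact ⟨by omega, not_not.2 hy.1⟩

noncomputable def insertLast (p : Fin (n + 1)) (τ : Equiv.Perm (Fin n)) :
    Equiv.Perm (Fin (n + 1)) :=
  Equiv.ofBijective (Fin.insertNth p (Fin.last n) (Fin.castSucc ∘ τ)) <|
    Finite.injective_iff_bijective.1 <|
      Fin.insertNth_injective ((Fin.castSucc_injective n).comp τ.injective)
        (by simp)

lemma coe_insertLast (p : Fin (n + 1)) (τ : Equiv.Perm (Fin n)) :
    ⇑(insertLast p τ) = Fin.insertNth p (Fin.last n) (Fin.castSucc ∘ τ) := rfl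

noncomputable def insertMax (x : SignedPerm n) (p : Fin (n + 1)) (b : Bool) : SignedPerm (n + 1) :=
  (insertLast p x.1, Fin.insertNth p b x.2)

lemma insertMax_injective :
    Function.Injective fun y : SignedPerm n × Fin (n + 1) × Bool =>
      insertMax y.1 y.2.1 y.2.2 := by
  rintro ⟨⟨σ, ε⟩, p, b⟩ ⟨⟨σ', ε'⟩, p', b'⟩ h
  simp only [insertMax, Prod.mk.injEq] at h
  obtain ⟨hσ, hε⟩ := h
  obtain rfl : p = p' := (insertLast p' σ').injective <| by
    rw [← DFunLike.congr_fun hσ p]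
    simp [coe_insertLast]
  have hσ' := congrArg DFunLike.coe hσ
  simp only [coe_insertLast, Fin.insertNth_inj, true_and] at hσ' hε
  obtain ⟨rfl, rfl⟩ := hε
  obtain rfl : σ = σ' := Equiv.ext fun a => Fin.castSucc_injective n (congrFun hσ' a)
  rfl

lemma insertMax_bijective :
    Function.Bijective fun y : SignedPerm n × Fin (n + 1) × Bool =>
      insertMax y.1 y.2.1 y.2.2 := by
  refine (Fintype.bijective_iff_injective_and_card _).2 ⟨insertMax_injective, ?_⟩
  simp only [Fintype.card_prod, Fintype.card_perm, Fintype.card_fin, Fintype.card_pi,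
    Fintype.card_bool, prod_const, card_univ, Nat.factorial_succ, pow_succ]
  ring

lemma word_insertMax (x : SignedPerm n) (p : Fin (n + 1)) (b : Bool) :
    word (insertMax x p b) = Fin.insertNth p (signedVal (Fin.last n) b) (word x) := by
  funext i
  cases i using Fin.succAboveCases p <;> simp [word, insertMax, coe_insertLast]

lemma zeroWord_insertMax (x : SignedPerm n) (p : Fin (n + 1)) (b : Bool) :
    zeroWord (insertMax x p b) = Fin.insertNth p.succ (signedVal (Fin.last n) b) (zeroWord x) := by
  rw [zeroWord, zeroWord, word_insertMax, Fin.insertNth_succ_cons]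

lemma des_insertMax_castSucc (x : SignedPerm n) (i : Fin n) (b : Bool) :
    des (insertMax x i.castSucc b) + (if zeroWord x i.succ < zeroWord x i.castSucc then 1 else 0)
      = des x + 1 := by
  rw [des, zeroWord_insertMax, Fin.succ_castSucc, descentCount_insertNth, des]
  have h1 := abs_le.1 (abs_zeroWord_le x i.castSucc)
  have h2 := abs_le.1 (abs_zeroWord_le x i.succ)
  cases b
  · rw [signedVal_false, if_pos (by simp only [Fin.val_last]; omega), if_neg (by simp only [Fin.val_last]; omega)]
  · rw [signedVal_true, if_neg (by simp only [Fin.val_last]; omega), if_pos (by simp only [Fin.val_last]; omega)]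

lemma des_insertMax_last (x : SignedPerm n) (b : Bool) :
    des (insertMax x (Fin.last n) b) = des x + if b then 0 else 1 := by
  rw [des, zeroWord_insertMax, Fin.succ_last, Fin.insertNth_last', descentCount_snoc, des]
  have h := abs_le.1 (abs_zeroWord_le x (Fin.last n))
  cases b
  · rw [signedVal_false, if_pos (by simp only [Fin.val_last]; omega)]
    simp
  · rw [signedVal_true, if_neg (by simp only [Fin.val_last]; omega)]
    simp

noncomputable def desPoly (n : ℕ) : ℤ[X] := ∑ x : SignedPerm n, X ^ des x

lemma sum_X_pow_des_insertMax (x : SignedPerm n) :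
    ∑ pb : Fin (n + 1) × Bool, (X : ℤ[X]) ^ des (insertMax x pb.1 pb.2)
      = (2 * (des x : ℤ[X]) + 1) * X ^ des x
        + (2 * ((n : ℤ[X]) - (des x : ℤ[X])) + 1) * X ^ (des x + 1) := by
  have hcard := card_filter_add_card_filter_not (s := univ) fun i : Fin n =>
    zeroWord x i.succ < zeroWord x i.castSucc
  rw [card_univ, Fintype.card_fin] at hcard
  have hdes : ∀ (i : Fin n) (b : Bool), (X : ℤ[X]) ^ des (insertMax x i.castSucc b)
      = if zeroWord x i.succ < zeroWord x i.castSucc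
        then X ^ des x else X ^ (des x + 1) := by
    intro i b
    have := des_insertMax_castSucc x i b
    split_ifs at this ⊢
    · rw [show des (insertMax x i.castSucc b) = des x by omega]
    · rw [show des (insertMax x i.castSucc b) = des x + 1 by omega]
  simp only [Fintype.sum_prod_type, Fin.sum_univ_castSucc, Fintype.sum_bool, hdes,
    des_insertMax_last, sum_add_distrib, sum_ite, sum_const, nsmul_eq_mul]
  have hd : #{i : Fin n | zeroWord x i.succ < zeroWord x i.castSucc} = des x := rfl
  rw [hd] at hcard
  rw [hd, show (#{i : Fin n | ¬zeroWord x i.succ < zeroWord x i.castSucc} : ℤ[X])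
    = n - des x by rw [eq_sub_iff_add_eq, add_comm]; exact_mod_cast hcard]
  simp only [if_true, Bool.false_eq_true, if_false, add_zero]
  ring

lemma desPoly_succ (n : ℕ) : desPoly (n + 1) = eulerStep (2 * n + 1) (desPoly n) := by
  rw [desPoly, ← insertMax_bijective.sum_comp (fun y => (X : ℤ[X]) ^ des y),
    Fintype.sum_prod_type, eulerStep, desPoly, derivative_sum, mul_sum, mul_sum, mul_sum,
    ← sum_add_distrib]
  refine sum_congr rfl fun x _ => ?_
  rw [sum_X_pow_des_insertMax, X_mul_derivative_X_pow]
  simp only [map_add, map_mul, map_natCast, C_ofNat, map_one]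
  ring

lemma coeff_desPoly (n k : ℕ) :
    (desPoly n).coeff k = ((X + 1) ^ (n + 1) * excPoly n).coeff (2 * k) := by
  refine coeff_eq_coeff_two_mul_of_eulerStep (Q := fun n => (X + 1) ^ (n + 1) * excPoly n)
    (fun n => 2 * n + 1) desPoly_succ X_add_one_pow_mul_excPoly_succ (fun k => ?_) n k
  have h1 : desPoly 0 = 1 := by simp [desPoly, des, descentCount]
  have h2 : excPoly 0 = 1 := by simp [excPoly, exc]
  rw [h1, h2, zero_add, pow_one, mul_one]
  simp only [coeff_add, coeff_X, coeff_one]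
  split_ifs <;> omega

lemma card_des_succ_eq (n k : ℕ) :
    #{x : SignedPerm n | des x = k + 1}
      = #{x : SignedPerm n | flagExc x = 2 * k + 1}
        + #{x : SignedPerm n | flagExc x = 2 * k + 2} := by
  have h : (X + 1) ^ (n + 1) * excPoly n = X * ∑ x : SignedPerm n, X ^ flagExc x
      + ∑ x : SignedPerm n, X ^ flagExc x := by
    rw [sum_X_pow_flagExc, excPoly]
    ring
  have := coeff_desPoly n (k + 1)
  rw [desPoly, coeff_sum_X_pow, Nat.mul_succ, h, coeff_add, coeff_X_mul, coeff_sum_X_pow,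
    coeff_sum_X_pow] at this
  exact_mod_cast this

end SignedPerm

/-- Corollary: type B Eulerian numbers from volumes.
For all `n ≥ 1` and `k ≥ 1`,
`B_{n,k} = #{w ∈ X_n : fexc w = 2k-2} + 2·#{w ∈ X_n : fexc w = 2k-1} + #{w ∈ X_n : fexc w = 2k}`. -/
theorem eulerianB_from_volumes (n k : ℕ) (hn : 1 ≤ n) (hk : 1 ≤ k) :
    {w : Equiv.Perm ℤ | IsSignedPerm n w ∧ desB n w = k}.ncard
      = {w : Equiv.Perm ℤ | InXn n w ∧ fexc n w = 2 * k - 2}.ncard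
        + 2 * {w : Equiv.Perm ℤ | InXn n w ∧ fexc n w = 2 * k - 1}.ncard
        + {w : Equiv.Perm ℤ | InXn n w ∧ fexc n w = 2 * k}.ncard := by
  obtain ⟨n, rfl⟩ : ∃ m, n = m + 1 := ⟨n - 1, by omega⟩
  obtain ⟨k, rfl⟩ : ∃ j, k = j + 1 := ⟨k - 1, by omega⟩
  have hX (m : ℕ) : {w | InXn (n + 1) w ∧ fexc (n + 1) w = m}.ncard
      = #{x : SignedPerm (n + 1) | x.InX ∧ x.flagExc = m} := by
    simp only [InXn, and_assoc, SignedPerm.ncard_isSignedPerm_and,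
      SignedPerm.zero_lt_toPerm_symm_one_iff, SignedPerm.fexc_toPerm]
  rw [show 2 * (k + 1) - 2 = 2 * k by omega, show 2 * (k + 1) - 1 = 2 * k + 1 by omega,
    Nat.mul_succ, SignedPerm.ncard_isSignedPerm_and, hX, hX, hX]
  simp only [SignedPerm.desB_toPerm]
  rw [SignedPerm.card_des_succ_eq, SignedPerm.card_flagExc_succ, SignedPerm.card_flagExc_succ]
  ring
end

section
/- For every n ≥ 1 and every signed permutation w ∈ 𝔅_n, 0 ≤ basc(w) ≤ n−1. Moreover, the minimum value is attained by exactly two signed permutations: #{w ∈ 𝔅_n : basc(w) = 0} = 2. -/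
open scoped Classical

/-!
Collapse the gap at `0`: the order isomorphism `ℤ ∖ {0} ≃ ℤ`, `x ↦ x - 1` for `x > 0`, turns
`a ≪ b` into `a + 2 ≤ b`. Framing the window as `-1, w_1, …, w_n, 1`, big ascents become the
steps of size at least `2` of a sequence `b_0 = -1, b_1, …, b_n, b_{n+1} = 0` with values in
`[-n, n - 1]`. If `n` of its `n + 1` steps had size `≥ 2`, the exceptional step would have to
drop from `n - 1` to `-n`, i.e. `w_i = n` and `w_{i+1} = -n = w_{-i}`, which is impossible.
If no step has size `≥ 2`, the position of `±n` in the window forces `b` to climb by exactly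
`1` all the way, which leaves only the identity and the window `-n ⋯ -1`.
-/

open Finset

theorem add_mul_sub_le_of_forall_add_le_succ {b : ℕ → ℤ} {d : ℤ} {a c : ℕ} (hac : a ≤ c)
    (h : ∀ i, a ≤ i → i < c → b i + d ≤ b (i + 1)) : b a + d * ((c : ℤ) - a) ≤ b c := by
  induction c, hac using Nat.le_induction with
  | base => simp
  | succ c hac ih =>
    have hlast := h c hac c.lt_succ_self
    have hprev := ih fun i hai hic => h i hai (by omega)
    push_cast
    linarith

theorem exists_forall_ne_of_card_le_card_filter_add_one {α : Type*} {s : Finset α}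
    {p : α → Prop} [DecidablePred p] (hs : s.Nonempty) (h : #s ≤ #(s.filter p) + 1) :
    ∃ i₀ ∈ s, ∀ j ∈ s, j ≠ i₀ → p j := by
  have hbad : #(s.filter fun j => ¬p j) ≤ 1 := by
    have := card_filter_add_card_filter_not (s := s) p
    omega
  by_cases hex : ∃ i₀ ∈ s, ¬p i₀
  · obtain ⟨i₀, hi₀, hpi₀⟩ := hex
    refine ⟨i₀, hi₀, fun j hj hji₀ => ?_⟩
    by_contra hpj
    exact hji₀ (card_le_one.mp hbad j (mem_filter.mpr ⟨hj, hpj⟩) i₀ (mem_filter.mpr ⟨hi₀, hpi₀⟩))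
  · push Not at hex
    obtain ⟨i₀, hi₀⟩ := hs
    exact ⟨i₀, hi₀, fun j hj _ => hex j hj⟩

namespace IsSignedPerm

variable {n : ℕ} {w u : Equiv.Perm ℤ}

theorem apply_zero (hw : IsSignedPerm n w) : w 0 = 0 := by
  have := hw.1 0
  rw [neg_zero] at this
  omega

theorem apply_ne_zero (hw : IsSignedPerm n w) {i : ℤ} (hi : i ≠ 0) : w i ≠ 0 :=
  fun h => hi (w.injective (h.trans hw.apply_zero.symm))

theorem abs_apply_le (hw : IsSignedPerm n w) {i : ℤ} (hi : |i| ≤ n) : |w i| ≤ n := by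
  by_contra! h
  rw [w.injective (hw.2 _ h)] at h
  omega

theorem ext_of_forall_pos (hw : IsSignedPerm n w) (hu : IsSignedPerm n u)
    (h : ∀ q : ℕ, 1 ≤ q → q ≤ n → w q = u q) : w = u := by
  have hpos : ∀ i : ℤ, 1 ≤ i → i ≤ n → w i = u i := fun i h1 h2 => by
    simpa [Int.toNat_of_nonneg (by omega : 0 ≤ i)] using h i.toNat (by omega) (by omega)
  ext i
  by_cases hi : |i| ≤ n
  · rw [abs_le] at hi
    rcases lt_trichotomy i 0 with hneg | rfl | hpos'
    · rw [← neg_neg i, hw.1, hu.1, hpos (-i) (by omega) (by omega)]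
    · rw [hw.apply_zero, hu.apply_zero]
    · exact hpos i hpos' (by omega)
  · push Not at hi
    rw [hw.2 i hi, hu.2 i hi]

theorem exists_apply_eq_or_eq_neg (hn : 1 ≤ n) (hw : IsSignedPerm n w) :
    ∃ p : ℕ, 1 ≤ p ∧ p ≤ n ∧ (w p = n ∨ w p = -n) := by
  set s := w.symm n
  have hs : w s = n := w.apply_symm_apply _
  have hs0 : s ≠ 0 := fun h => by rw [h, hw.apply_zero] at hs; omega
  have hsn : |s| ≤ n := by
    by_contra! h
    rw [hw.2 s h] at hs
    rw [hs, abs_of_nonneg (by omega)] at h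
    exact lt_irrefl _ h
  rw [abs_le] at hsn
  rcases lt_or_gt_of_ne hs0 with hneg | hpos
  · refine ⟨(-s).toNat, by omega, by omega, Or.inr ?_⟩
    rw [Int.toNat_of_nonneg (by omega), hw.1, hs]
  · exact ⟨s.toNat, by omega, by omega, Or.inl (by rwa [Int.toNat_of_nonneg hpos.le])⟩

end IsSignedPerm

theorem isSignedPerm_one (n : ℕ) : IsSignedPerm n 1 :=
  ⟨fun _ => rfl, fun _ _ => rfl⟩

def halfRotationFun (n : ℕ) (i : ℤ) : ℤ :=
  if 1 ≤ i ∧ i ≤ n then i - (n + 1) else if -n ≤ i ∧ i ≤ -1 then i + (n + 1) else i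

theorem halfRotationFun_involutive (n : ℕ) : Function.Involutive (halfRotationFun n) := by
  intro i
  simp only [halfRotationFun]
  split_ifs <;> omega

/-- The signed permutation with window `-n ⋯ -1`. -/
def halfRotation (n : ℕ) : Equiv.Perm ℤ := (halfRotationFun_involutive n).toPerm

theorem halfRotation_apply (n : ℕ) (i : ℤ) : halfRotation n i = halfRotationFun n i := rfl

theorem isSignedPerm_halfRotation (n : ℕ) : IsSignedPerm n (halfRotation n) := by
  refine ⟨fun i => ?_, fun i hi => ?_⟩ <;> simp only [halfRotation_apply, halfRotationFun]
  · split_ifs <;> omega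
  · rw [lt_abs] at hi
    split_ifs <;> omega

theorem one_ne_halfRotation {n : ℕ} (hn : 1 ≤ n) : 1 ≠ halfRotation n := by
  intro h
  have h1 := congrArg (· 1) h
  simp only [Equiv.Perm.one_apply, halfRotation_apply, halfRotationFun] at h1
  split_ifs at h1 <;> omega

def collapse (x : ℤ) : ℤ := if 0 < x then x - 1 else x

theorem lll_iff_collapse_add_two_le {a b : ℤ} (ha : a ≠ 0) (hb : b ≠ 0) :
    Lll a b ↔ collapse a + 2 ≤ collapse b := by
  simp only [collapse]
  constructor
  · rintro ⟨c, hc, hac, hcb⟩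
    split_ifs <;> omega
  · intro h
    refine ⟨if a = -1 then 1 else a + 1, ?_, ?_, ?_⟩ <;> split_ifs at h ⊢ <;> omega

theorem collapse_mem_Icc {n x : ℤ} (hx0 : x ≠ 0) (hx : |x| ≤ n) :
    -n ≤ collapse x ∧ collapse x ≤ n - 1 := by
  rw [abs_le] at hx
  simp only [collapse]
  split_ifs <;> omega

def frame (n : ℕ) (w : Equiv.Perm ℤ) (j : ℕ) : ℤ :=
  if j = 0 then -1 else if j = n + 1 then 1 else w j

section Frame

variable {n : ℕ} {w : Equiv.Perm ℤ}

@[simp] theorem frame_zero : frame n w 0 = -1 := rfl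

@[simp] theorem frame_succ_self : frame n w (n + 1) = 1 := by simp [frame]

theorem frame_of_le {j : ℕ} (hj : 1 ≤ j) (hjn : j ≤ n) : frame n w j = w j := by
  simp only [frame]
  rw [if_neg (by omega), if_neg (by omega)]

theorem frame_ne_zero (hw : IsSignedPerm n w) (j : ℕ) : frame n w j ≠ 0 := by
  simp only [frame]
  split_ifs
  · omega
  · omega
  · exact hw.apply_ne_zero (by omega)

theorem abs_frame_le (hn : 1 ≤ n) (hw : IsSignedPerm n w) {j : ℕ} (hj : j ≤ n + 1) :
    |frame n w j| ≤ n := by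
  simp only [frame]
  split_ifs
  · rw [abs_neg, abs_one]; omega
  · rw [abs_one]; omega
  · exact hw.abs_apply_le (by rw [abs_le]; omega)

def collapsedFrame (n : ℕ) (w : Equiv.Perm ℤ) (j : ℕ) : ℤ := collapse (frame n w j)

@[simp] theorem collapsedFrame_zero : collapsedFrame n w 0 = -1 := by
  simp [collapsedFrame, collapse]

@[simp] theorem collapsedFrame_succ_self : collapsedFrame n w (n + 1) = 0 := by
  simp [collapsedFrame, collapse]

theorem collapsedFrame_of_le {j : ℕ} (hj : 1 ≤ j) (hjn : j ≤ n) :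
    collapsedFrame n w j = collapse (w j) := by
  rw [collapsedFrame, frame_of_le hj hjn]

theorem collapsedFrame_mem_Icc (hn : 1 ≤ n) (hw : IsSignedPerm n w) {j : ℕ} (hj : j ≤ n + 1) :
    -n ≤ collapsedFrame n w j ∧ collapsedFrame n w j ≤ n - 1 :=
  collapse_mem_Icc (frame_ne_zero hw j) (abs_frame_le hn hw hj)

theorem lll_frame_iff (hw : IsSignedPerm n w) (j : ℕ) :
    Lll (frame n w j) (frame n w (j + 1)) ↔
      collapsedFrame n w j + 2 ≤ collapsedFrame n w (j + 1) :=
  lll_iff_collapse_add_two_le (frame_ne_zero hw j) (frame_ne_zero hw (j + 1))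

end Frame

noncomputable def bigAscents (n : ℕ) (w : Equiv.Perm ℤ) : Finset ℕ :=
  (range (n + 1)).filter fun j => Lll (frame n w j) (frame n w (j + 1))

theorem lll_neg_one_iff {b : ℤ} : Lll (-1) b ↔ 2 ≤ b :=
  ⟨fun ⟨c, hc, h1, h2⟩ => by omega, fun h => ⟨1, one_ne_zero, by omega, by omega⟩⟩

theorem lll_one_iff {a : ℤ} : Lll a 1 ↔ a ≤ -2 :=
  ⟨fun ⟨c, hc, h1, h2⟩ => by omega, fun h => ⟨-1, by omega, by omega, by omega⟩⟩

theorem basc_condition_iff_lll_frame {n : ℕ} (hn : 1 ≤ n) (w : Equiv.Perm ℤ) {i : ℤ}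
    (hi : i = -1 ∨ 1 ≤ i ∧ i ≤ n) :
    (if i = -1 then 2 ≤ w 1 else if i = n then w n ≤ -2 else Lll (w i) (w (i + 1))) ↔
      Lll (frame n w i.toNat) (frame n w (i.toNat + 1)) := by
  rcases hi with rfl | ⟨hi1, hin⟩
  · simp [frame_of_le le_rfl hn, lll_neg_one_iff]
  · rw [if_neg (by omega)]
    by_cases hin' : i = n
    · subst hin'
      simp [frame_of_le hn le_rfl, lll_one_iff]
    · rw [if_neg hin', frame_of_le (by omega) (by omega), frame_of_le (by omega) (by omega),
        Int.toNat_of_nonneg (by omega), Nat.cast_add, Int.toNat_of_nonneg (by omega),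
        Nat.cast_one]

theorem basc_eq_card_bigAscents {n : ℕ} (hn : 1 ≤ n) (w : Equiv.Perm ℤ) :
    basc n w = #(bigAscents n w) := by
  unfold basc bigAscents
  refine card_nbij' Int.toNat (fun j => if j = 0 then -1 else (j : ℤ)) ?_ ?_ ?_ ?_
  · intro i hi
    simp only [coe_filter, Set.mem_ofPred_eq, mem_insert, mem_Icc, mem_range] at hi ⊢
    exact ⟨by omega, (basc_condition_iff_lll_frame hn w hi.1).mp hi.2⟩
  · intro j hj
    simp only [coe_filter, Set.mem_ofPred_eq, mem_insert, mem_Icc, mem_range] at hj ⊢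
    set i : ℤ := if j = 0 then -1 else (j : ℤ) with hi
    have hmem : i = -1 ∨ 1 ≤ i ∧ i ≤ n := by rw [hi]; split_ifs <;> omega
    have hij : i.toNat = j := by rw [hi]; split_ifs <;> omega
    exact ⟨hmem, (basc_condition_iff_lll_frame hn w hmem).mpr (hij ▸ hj.2)⟩
  · intro i hi
    simp only [coe_filter, Set.mem_ofPred_eq, mem_insert, mem_Icc] at hi
    dsimp only
    split_ifs <;> omega
  · intro j _
    dsimp only
    split_ifs <;> omega

theorem basc_eq_zero_iff {n : ℕ} (hn : 1 ≤ n) (w : Equiv.Perm ℤ) :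
    basc n w = 0 ↔ ∀ j ≤ n, ¬Lll (frame n w j) (frame n w (j + 1)) := by
  rw [basc_eq_card_bigAscents hn, card_eq_zero, bigAscents, filter_eq_empty_iff]
  simp only [mem_range, Nat.lt_succ_iff]

theorem basc_le_sub_one {n : ℕ} (hn : 1 ≤ n) {w : Equiv.Perm ℤ} (hw : IsSignedPerm n w) :
    basc n w ≤ n - 1 := by
  rw [basc_eq_card_bigAscents hn]
  by_contra! hcard
  obtain ⟨i₀, hi₀, hbig⟩ := exists_forall_ne_of_card_le_card_filter_add_one
    (p := fun j => Lll (frame n w j) (frame n w (j + 1))) (nonempty_range_add_one (n := n))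
    (by rw [card_range]; unfold bigAscents at hcard; omega)
  rw [mem_range] at hi₀
  have hstep : ∀ j, j < n + 1 → j ≠ i₀ →
      collapsedFrame n w j + 2 ≤ collapsedFrame n w (j + 1) :=
    fun j hj hji₀ => (lll_frame_iff hw j).mp (hbig j (mem_range.mpr hj) hji₀)
  have hbefore := add_mul_sub_le_of_forall_add_le_succ (b := collapsedFrame n w) (Nat.zero_le i₀)
    fun j _ hj => hstep j (by omega) (by omega)
  have hafter := add_mul_sub_le_of_forall_add_le_succ (b := collapsedFrame n w) (a := i₀ + 1)
    (c := n + 1) (by omega) fun j hj hjn => hstep j hjn (by omega)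
  have hbi₀ := collapsedFrame_mem_Icc hn hw (j := i₀) (by omega)
  have hbi₁ := collapsedFrame_mem_Icc hn hw (j := i₀ + 1) (by omega)
  rw [collapsedFrame_zero] at hbefore
  rw [collapsedFrame_succ_self] at hafter
  push_cast at hbefore hafter
  -- the exceptional step must fall from `n - 1` to `-n`, in the middle of the window
  have hi₀n : 1 ≤ i₀ ∧ i₀ + 1 ≤ n := by omega
  rw [collapsedFrame_of_le hi₀n.1 (by omega)] at hbefore hbi₀
  rw [collapsedFrame_of_le (by omega) hi₀n.2] at hafter hbi₁
  have hwi₀ : w i₀ = n := by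
    have := hw.apply_ne_zero (i := i₀) (by omega)
    simp only [collapse] at hbefore hbi₀
    split_ifs at hbefore hbi₀ <;> omega
  have hwi₁ : w (i₀ + 1 : ℕ) = -n := by
    have := hw.apply_ne_zero (i := (i₀ + 1 : ℕ)) (by omega)
    simp only [collapse] at hafter hbi₁
    split_ifs at hafter hbi₁ <;> omega
  have := w.injective (show w (-(i₀ : ℤ)) = w (i₀ + 1 : ℕ) by rw [hw.1, hwi₀, hwi₁])
  omega

theorem basc_one {n : ℕ} (hn : 1 ≤ n) : basc n 1 = 0 := by
  rw [basc_eq_zero_iff hn]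
  rintro j hj ⟨c, hc, h1, h2⟩
  simp only [frame, Equiv.Perm.one_apply] at h1 h2
  split_ifs at h1 h2 <;> omega

theorem basc_halfRotation {n : ℕ} (hn : 1 ≤ n) : basc n (halfRotation n) = 0 := by
  rw [basc_eq_zero_iff hn]
  rintro j hj ⟨c, hc, h1, h2⟩
  simp only [frame, halfRotation_apply, halfRotationFun] at h1 h2
  split_ifs at h1 h2 <;> omega

theorem collapsedFrame_le_add_of_basc_eq_zero {n : ℕ} (hn : 1 ≤ n) {w : Equiv.Perm ℤ}
    (hw : IsSignedPerm n w) (h0 : basc n w = 0) {i j : ℕ} (hij : i ≤ j) (hjn : j ≤ n + 1) :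
    collapsedFrame n w j ≤ collapsedFrame n w i + ((j : ℤ) - i) := by
  rw [basc_eq_zero_iff hn] at h0
  have := add_mul_sub_le_of_forall_add_le_succ (b := fun k => -collapsedFrame n w k) (d := -1)
    hij fun k _ hk => by
      have := (lll_frame_iff hw k).not.mp (h0 k (by omega))
      omega
  linarith

theorem eq_one_or_eq_halfRotation_of_basc_eq_zero {n : ℕ} (hn : 1 ≤ n) {w : Equiv.Perm ℤ}
    (hw : IsSignedPerm n w) (h0 : basc n w = 0) : w = 1 ∨ w = halfRotation n := by
  have hclimb := @collapsedFrame_le_add_of_basc_eq_zero n hn w hw h0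
  have hb₀ := collapsedFrame_zero (n := n) (w := w)
  have hbn := collapsedFrame_succ_self (n := n) (w := w)
  -- the value `±n` sits at one end of the window and pins every `b_q` between two bounds
  obtain ⟨p, hp1, hpn, hwp | hwp⟩ := hw.exists_apply_eq_or_eq_neg hn
  · left
    have hbp : collapsedFrame n w p = n - 1 := by
      rw [collapsedFrame_of_le hp1 hpn, hwp, collapse, if_pos (by omega)]
    have hp : p = n := by have := hclimb (Nat.zero_le p) (by omega); omega
    refine hw.ext_of_forall_pos (isSignedPerm_one n) fun q hq1 hqn => ?_
    have h1 := hclimb (Nat.zero_le q) (by omega)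
    have h2 := hclimb (i := q) (j := p) (by omega) (by omega)
    have := hw.apply_ne_zero (i := q) (by omega)
    rw [collapsedFrame_of_le hq1 hqn] at h1 h2
    simp only [collapse, Equiv.Perm.one_apply] at h1 h2 ⊢
    split_ifs at h1 h2 <;> omega
  · right
    have hbp : collapsedFrame n w p = -n := by
      rw [collapsedFrame_of_le hp1 hpn, hwp, collapse, if_neg (by omega)]
    have hp : p = 1 := by have := hclimb (i := p) (j := n + 1) (by omega) le_rfl; omega
    refine hw.ext_of_forall_pos (isSignedPerm_halfRotation n) fun q hq1 hqn => ?_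
    have h1 := hclimb (i := p) (j := q) (by omega) (by omega)
    have h2 := hclimb (i := q) (j := n + 1) (by omega) le_rfl
    have := hw.apply_ne_zero (i := q) (by omega)
    rw [collapsedFrame_of_le hq1 hqn] at h1 h2
    simp only [collapse, halfRotation_apply, halfRotationFun] at h1 h2 ⊢
    split_ifs at h1 h2 ⊢ <;> omega

/-- For every `n ≥ 1` and every signed permutation `w ∈ 𝔅_n`,
`0 ≤ basc(w) ≤ n - 1`; moreover exactly two signed permutations attain `basc(w) = 0`. -/
theorem basc_range_and_min (n : ℕ) (hn : 1 ≤ n) :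
    (∀ w : Equiv.Perm ℤ, IsSignedPerm n w → basc n w ≤ n - 1) ∧
    {w : Equiv.Perm ℤ | IsSignedPerm n w ∧ basc n w = 0}.ncard = 2 := by
  refine ⟨fun w hw => basc_le_sub_one hn hw, ?_⟩
  have hmin : {w : Equiv.Perm ℤ | IsSignedPerm n w ∧ basc n w = 0} = {1, halfRotation n} := by
    ext w
    constructor
    · rintro ⟨hw, h0⟩
      exact eq_one_or_eq_halfRotation_of_basc_eq_zero hn hw h0
    · rintro (rfl | rfl)
      · exact ⟨isSignedPerm_one n, basc_one hn⟩
      · exact ⟨isSignedPerm_halfRotation n, basc_halfRotation hn⟩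
  rw [hmin, Set.ncard_pair (one_ne_halfRotation hn)]
end

section
/- Let n ≥ 2, 3 ≤ k ≤ 2n−1, and r ≥ 0. Then #{y ∈ ℤⁿ : 0 ≤ y_1 ≤ r, 0 ≤ y_j ≤ 2r for 2 ≤ j ≤ n, y_1+⋯+y_n = (k−1)r} = L_{n−1,k−2}(r) + L'_{n−1,k−1}(r). Consequently, L_{n,k}(r) = L'_{n,k}(r) + L_{n−1,k−2}(r) + L'_{n−1,k−1}(r). (This is the lattice-point form of the identity h*_{Δ_{C_n,k}}(t) = h*_{Δ'_{C_n,k}}(t) + (1−t)(h*_{Δ'_{C_{n−1},k−1}}(t) + h*_{Δ_{C_{n−1},k−2}}(t)).) -/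
open scoped Classical

/-! On the slice `∑ y = s`, `s = (k-1)r`, the capped coordinate `y₁ ∈ [0, r]` is a slack variable,
so the slice is equinumerous with `{x ∈ [0, 2r]^{n-1} : s - r ≤ ∑ x ≤ s}`. Splitting the range of
`x₁` at `r` and translating its upper half `[r+1, 2r]` down by `r` turns this into
`{x₁ ≤ r, s - r ≤ ∑ x ≤ s} ⊔ {1 ≤ x₁ ≤ r, s - 2r ≤ ∑ x ≤ s - r}`. The points of `L_{n-1,k-2}(r)`
with `x₁ = 0` are, by the same slack argument, equinumerous with the slice `{x₁ ≤ r, ∑ x = s - r}`,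
which together with `L'_{n-1,k-1}(r)` makes up the first piece. The second identity cuts
`(k-1)r ≤ ∑ y ≤ kr` at `(k-1)r`. -/

open Finset

section Slab

variable {α : Type*} (T : Finset α) (f : α → ℤ)

noncomputable def slabCard (c₀ c₁ lo hi : ℤ) : ℕ :=
  #{p ∈ Icc c₀ c₁ ×ˢ T | lo ≤ p.1 + f p.2 ∧ p.1 + f p.2 ≤ hi}

theorem slabCard_split_sum {c₀ c₁ lo mid hi : ℤ} (h₁ : lo ≤ mid + 1) (h₂ : mid ≤ hi) :
    slabCard T f c₀ c₁ lo hi = slabCard T f c₀ c₁ lo mid + slabCard T f c₀ c₁ (mid + 1) hi := by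
  unfold slabCard
  rw [← card_union_of_disjoint (disjoint_filter.2 fun _ _ _ _ => by omega), ← filter_or]
  exact congrArg card (filter_congr fun _ _ => by omega)

theorem slabCard_split_head {c₀ c c₁ lo hi : ℤ} (h₁ : c₀ ≤ c + 1) (h₂ : c ≤ c₁) :
    slabCard T f c₀ c₁ lo hi = slabCard T f c₀ c lo hi + slabCard T f (c + 1) c₁ lo hi := by
  have hIcc : Icc c₀ c₁ = Icc c₀ c ∪ Icc (c + 1) c₁ := by
    ext a
    simp only [mem_union, mem_Icc]
    omega
  have hdisj : Disjoint (Icc c₀ c) (Icc (c + 1) c₁) :=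
    disjoint_left.2 fun a ha hb => by rw [mem_Icc] at ha hb; omega
  rw [slabCard, hIcc, union_product, filter_union,
    card_union_of_disjoint (disjoint_filter_filter (disjoint_product.2 (.inl hdisj)))]
  rfl

theorem slabCard_add_const (c₀ c₁ lo hi t : ℤ) :
    slabCard T f (c₀ + t) (c₁ + t) (lo + t) (hi + t) = slabCard T f c₀ c₁ lo hi := by
  refine card_nbij' (fun p => (p.1 - t, p.2)) (fun p => (p.1 + t, p.2)) ?_ ?_ ?_ ?_ <;>
    intro p <;> grind [coe_filter]

theorem slabCard_head_self (c lo hi : ℤ) :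
    slabCard T f c c lo hi = #{x ∈ T | lo - c ≤ f x ∧ f x ≤ hi - c} := by
  refine card_nbij' Prod.snd (fun x => (c, x)) ?_ ?_ ?_ ?_ <;> intro p <;> grind [coe_filter]

theorem slabCard_sum_self (c₀ c₁ s : ℤ) :
    slabCard T f c₀ c₁ s s = #{x ∈ T | s - c₁ ≤ f x ∧ f x ≤ s - c₀} := by
  refine card_nbij' Prod.snd (fun x => (s - f x, x)) ?_ ?_ ?_ ?_ <;> intro p <;>
    grind [coe_filter]

end Slab

theorem card_filter_piFinset_sum_succ {β : Type*} [AddCommMonoid β] {m : ℕ}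
    (S : Fin (m + 1) → Finset β) (P : β → Prop) [DecidablePred P] :
    #{y ∈ Fintype.piFinset S | P (∑ i, y i)} =
      #{p ∈ S 0 ×ˢ Fintype.piFinset (Fin.tail S) | P (p.1 + ∑ i, p.2 i)} := by
  refine card_equiv (Fin.consEquiv fun _ => β).symm fun y => ?_
  simp [Fin.sum_univ_succ, Fin.forall_fin_succ, Fin.tail]

section Cube

noncomputable def cube (m : ℕ) (b : ℤ) : Finset (Fin m → ℤ) :=
  Fintype.piFinset fun _ => Icc 0 b

variable (m : ℕ) {b : ℤ}

theorem card_filter_cube_succ (lo hi : ℤ) :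
    #{x ∈ cube (m + 1) b | lo ≤ ∑ i, x i ∧ ∑ i, x i ≤ hi} =
      slabCard (cube m b) univ.sum 0 b lo hi :=
  card_filter_piFinset_sum_succ _ fun s => lo ≤ s ∧ s ≤ hi

theorem ncard_capped_eq_slabCard {c : ℤ} (hc : c ≤ b) (lo hi : ℤ) :
    {y : Fin (m + 1) → ℤ | (∀ j, 0 ≤ y j ∧ y j ≤ b) ∧ (∀ j : Fin (m + 1), (j : ℕ) = 0 → y j ≤ c) ∧
        lo ≤ ∑ j, y j ∧ ∑ j, y j ≤ hi}.ncard =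
      slabCard (cube m b) univ.sum 0 c lo hi := by
  have hset : {y : Fin (m + 1) → ℤ | (∀ j, 0 ≤ y j ∧ y j ≤ b) ∧
      (∀ j : Fin (m + 1), (j : ℕ) = 0 → y j ≤ c) ∧ lo ≤ ∑ j, y j ∧ ∑ j, y j ≤ hi} =
      ↑({y ∈ Fintype.piFinset (Fin.cons (Icc 0 c) fun _ => Icc 0 b) |
        lo ≤ ∑ j, y j ∧ ∑ j, y j ≤ hi} : Finset (Fin (m + 1) → ℤ)) := by
    ext y
    simp only [Set.mem_ofPred_eq, coe_filter, Fin.cons_zero, Fin.cons_succ, mem_Icc,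
      Fintype.mem_piFinset, Fin.forall_fin_succ]
    grind
  rw [hset, Set.ncard_coe_finset, card_filter_piFinset_sum_succ _ fun s => lo ≤ s ∧ s ≤ hi]
  rfl

theorem ncard_capped_slice_eq_slabCard {c : ℤ} (hc : c ≤ b) (s : ℤ) :
    {y : Fin (m + 1) → ℤ | (∀ j, 0 ≤ y j ∧ y j ≤ b) ∧ (∀ j : Fin (m + 1), (j : ℕ) = 0 → y j ≤ c) ∧
        ∑ j, y j = s}.ncard =
      slabCard (cube m b) univ.sum 0 c s s := by
  rw [← ncard_capped_eq_slabCard m hc]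
  refine congrArg Set.ncard (Set.ext fun y => and_congr_right fun _ => and_congr_right fun _ => ?_)
  omega

theorem slabCard_cube_slice {r : ℤ} (hr : 0 ≤ r) (s : ℤ) :
    slabCard (cube (m + 1) (2 * r)) univ.sum 0 r s s =
      slabCard (cube m (2 * r)) univ.sum 0 r (s - 2 * r) (s - r) +
        slabCard (cube m (2 * r)) univ.sum 0 r (s - r + 1) s := by
  calc slabCard (cube (m + 1) (2 * r)) univ.sum 0 r s s
      = slabCard (cube m (2 * r)) univ.sum 0 (2 * r) (s - r) s := by
        rw [slabCard_sum_self, sub_zero, card_filter_cube_succ]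
    _ = slabCard (cube m (2 * r)) univ.sum 0 r (s - r) s +
          slabCard (cube m (2 * r)) univ.sum (r + 1) (2 * r) (s - r) s :=
        slabCard_split_head _ _ (by omega) (by omega)
    _ = slabCard (cube m (2 * r)) univ.sum 0 r (s - r) s +
          slabCard (cube m (2 * r)) univ.sum 1 r (s - 2 * r) (s - r) := by
        rw [← slabCard_add_const _ _ 1 r (s - 2 * r) (s - r) r]
        ring_nf
    _ = slabCard (cube m (2 * r)) univ.sum 0 r (s - r) (s - r) +
          slabCard (cube m (2 * r)) univ.sum 0 r (s - r + 1) s +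
          slabCard (cube m (2 * r)) univ.sum 1 r (s - 2 * r) (s - r) := by
        rw [slabCard_split_sum _ _ (mid := s - r) (by omega) (by omega)]
    _ = slabCard (cube m (2 * r)) univ.sum 0 0 (s - 2 * r) (s - r) +
          slabCard (cube m (2 * r)) univ.sum 0 r (s - r + 1) s +
          slabCard (cube m (2 * r)) univ.sum 1 r (s - 2 * r) (s - r) := by
        rw [slabCard_sum_self, slabCard_head_self]
        ring_nf
    _ = _ := by
        rw [slabCard_split_head _ _ (c₀ := 0) (c := 0) (c₁ := r) (lo := s - 2 * r) (hi := s - r)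
          (by omega) hr, zero_add]
        ring

end Cube

theorem Lc_succ_eq_slabCard (m k r : ℕ) :
    Lc (m + 1) k r = slabCard (cube m (2 * r)) univ.sum 0 r (((k : ℤ) - 1) * r) (k * r) :=
  ncard_capped_eq_slabCard m (by omega) _ _

theorem Lp_succ_eq_slabCard (m r : ℕ) {k : ℕ} (hk : k ≠ 1) :
    Lp (m + 1) k r = slabCard (cube m (2 * r)) univ.sum 0 r (((k : ℤ) - 1) * r + 1) (k * r) := by
  rw [Lp, if_neg hk]
  simp_rw [Int.lt_iff_add_one_le]
  exact ncard_capped_eq_slabCard m (by omega) _ _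

theorem closed_vs_half_open_general (n k r : ℕ) (hn : 2 ≤ n) (hk3 : 3 ≤ k) :
    Set.ncard {y : Fin n → ℤ |
        (∀ j, 0 ≤ y j ∧ y j ≤ 2 * (r : ℤ)) ∧ (∀ j : Fin n, (j : ℕ) = 0 → y j ≤ (r : ℤ)) ∧
        ∑ j, y j = ((k : ℤ) - 1) * r}
      = Lc (n - 1) (k - 2) r + Lp (n - 1) (k - 1) r
    ∧ Lc n k r = Lp n k r + Lc (n - 1) (k - 2) r + Lp (n - 1) (k - 1) r := by
  obtain ⟨m, rfl⟩ : ∃ m, n = m + 1 + 1 := ⟨n - 2, by omega⟩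
  set s : ℤ := ((k : ℤ) - 1) * r with hs
  have hslice := slabCard_cube_slice m (Int.natCast_nonneg r) s
  have hclosed := slabCard_split_sum (cube (m + 1) (2 * r)) univ.sum (c₀ := 0) (c₁ := r)
    (lo := s) (mid := s) (hi := k * r) (by omega) (by nlinarith)
  rw [Nat.add_sub_cancel, ncard_capped_slice_eq_slabCard (m + 1) (by omega),
    Lc_succ_eq_slabCard, Lp_succ_eq_slabCard _ _ (by omega),
    Lc_succ_eq_slabCard, Lp_succ_eq_slabCard _ _ (by omega)]
  push_cast [Nat.cast_sub (by omega : 2 ≤ k), Nat.cast_sub (by omega : 1 ≤ k)]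
  rw [show ((k : ℤ) - 2 - 1) * r = s - 2 * r by ring, show ((k : ℤ) - 2) * r = s - r by ring,
    show ((k : ℤ) - 1 - 1) * r = s - r by ring, ← hs, ← hslice]
  exact ⟨rfl, by omega⟩

/-- Closed vs. half-open hypersimplices, lattice-point form.
For `n ≥ 2`, `3 ≤ k ≤ 2n-1` and `r ≥ 0`, the number of lattice points of the slice
`{y : sum = (k-1)r}` equals `L_{n-1,k-2}(r) + L'_{n-1,k-1}(r)`; consequently
`L_{n,k}(r) = L'_{n,k}(r) + L_{n-1,k-2}(r) + L'_{n-1,k-1}(r)`. -/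
theorem closed_vs_half_open (n k r : ℕ) (hn : 2 ≤ n) (hk3 : 3 ≤ k) (hk : k ≤ 2 * n - 1) :
    Set.ncard {y : Fin n → ℤ |
        (∀ j, 0 ≤ y j ∧ y j ≤ 2 * (r : ℤ)) ∧ (∀ j : Fin n, (j : ℕ) = 0 → y j ≤ (r : ℤ)) ∧
        ∑ j, y j = ((k : ℤ) - 1) * r}
      = Lc (n - 1) (k - 2) r + Lp (n - 1) (k - 1) r
    ∧ Lc n k r = Lp n k r + Lc (n - 1) (k - 2) r + Lp (n - 1) (k - 1) r :=
  closed_vs_half_open_general n k r hn hk3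
end
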